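/- arXiv:2404.04190 — 5 statements merged into one kernel-verified Lean document; each statement's English description precedes it below -/
import Mathlib

section
/- For every polynomial f ∈ ℝ[x_1,...,x_n], the 1-norm of its coefficients in the Chebyshev basis is at most the 1-norm of its coefficients in the monomial basis: ‖f‖_{1,T} ≤ ‖f‖_1. -/
open MvPolynomial

section ChebAux

open Polynomial Finset

/-- Abbreviation for real Chebyshev polynomials of the first kind. -/
noncomputable abbrev chebTz : ℤ → Polynomial ℝ := Polynomial.Chebyshev.T ℝ
/-- Abbreviation for a constant polynomial binomial coefficient. -/
noncomputable abbrev chCoe (a b : ℕ) : Polynomial ℝ := Polynomial.C ((a.choose b : ℝ))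

lemma T_nat_cast' (m : ℕ) : chebTz ((m:ℤ)+2) = 2 * Polynomial.X * chebTz ((m:ℤ)+1) - chebTz (m:ℤ) :=
  Polynomial.Chebyshev.T_add_two ℝ m

lemma T_coeff_zero_of_lt : ∀ (m k : ℕ), m < k → (chebTz m).coeff k = 0 := by
  intro m
  induction m using Nat.strong_induction_on with
  | _ m ih =>
    match m, ih with
    | 0, _ =>
      intro k hk
      show (Polynomial.Chebyshev.T ℝ 0).coeff k = 0
      rw [Polynomial.Chebyshev.T_zero, Polynomial.coeff_one]
      simp; omega
    | 1, _ =>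
      intro k hk
      show (Polynomial.Chebyshev.T ℝ 1).coeff k = 0
      rw [Polynomial.Chebyshev.T_one, Polynomial.coeff_X]
      simp; omega
    | (m+2), ih =>
      intro k hk
      have h2 : ((m+2 : ℕ) : ℤ) = (m : ℤ) + 2 := by push_cast; ring
      have h1 : ((m+1 : ℕ) : ℤ) = (m : ℤ) + 1 := by push_cast; ring
      have hk1 : k = (k-1) + 1 := by omega
      rw [h2, T_nat_cast', Polynomial.coeff_sub, ih m (by omega) k (by omega), sub_zero, mul_assoc,
        Polynomial.coeff_ofNat_mul, hk1, Polynomial.coeff_X_mul, ← h1,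
        ih (m+1) (by omega) (k-1) (by omega), mul_zero]

lemma T_coeff_self : ∀ (m : ℕ), (chebTz m).coeff m = if m = 0 then 1 else 2^(m-1) := by
  intro m
  induction m using Nat.strong_induction_on with
  | _ m ih =>
    match m, ih with
    | 0, _ => show (Polynomial.Chebyshev.T ℝ 0).coeff 0 = _; rw [Polynomial.Chebyshev.T_zero]; simp
    | 1, _ => show (Polynomial.Chebyshev.T ℝ 1).coeff 1 = _; rw [Polynomial.Chebyshev.T_one]; simp
    | (m+2), ih =>
      have h2 : ((m+2 : ℕ) : ℤ) = (m : ℤ) + 2 := by push_cast; ring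
      have h1 : ((m+1 : ℕ) : ℤ) = (m : ℤ) + 1 := by push_cast; ring
      rw [h2, T_nat_cast', Polynomial.coeff_sub, T_coeff_zero_of_lt m (m+2) (by omega), sub_zero,
        mul_assoc, Polynomial.coeff_ofNat_mul, show m+2 = (m+1)+1 from rfl, Polynomial.coeff_X_mul,
        ← h1, ih (m+1) (by omega)]
      simp only [Nat.add_eq_zero, and_false, if_false, Nat.succ_ne_zero]
      rw [show m + 1 - 1 = m from rfl, show m + 1 + 1 - 1 = m + 1 from rfl, pow_succ]
      ring

lemma T_coeff_self_ne (m : ℕ) : (chebTz m).coeff m ≠ 0 := by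
  rw [T_coeff_self]; split <;> positivity

lemma univ_sum_single {n : ℕ} (t : Fin n → ℕ) :
    (∑ i, Finsupp.single i (t i)) = Finsupp.equivFunOnFinite.symm t := by
  ext j; simp [Finsupp.single_apply, Finsupp.coe_equivFunOnFinite_symm]

lemma prod_monomial' {n : ℕ} (σ : Fin n → (Fin n →₀ ℕ)) (a : Fin n → ℝ) :
    ∏ i, MvPolynomial.monomial (σ i) (a i) = MvPolynomial.monomial (∑ i, σ i) (∏ i, a i) := by
  classical
  induction (univ : Finset (Fin n)) using Finset.induction with
  | empty => simp [MvPolynomial.monomial_zero']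
  | insert _ _ h ih =>
      rw [Finset.prod_insert h, Finset.prod_insert h, Finset.sum_insert h, ih,
        MvPolynomial.monomial_mul]

lemma aeval_X_eq_sum {n : ℕ} (i : Fin n) (p : ℝ[X]) :
    Polynomial.aeval (MvPolynomial.X (R := ℝ) i) p
      = ∑ k ∈ range (p.natDegree + 1), MvPolynomial.monomial (Finsupp.single i k) (p.coeff k) := by
  rw [Polynomial.aeval_eq_sum_range]
  refine Finset.sum_congr rfl fun k _ => ?_
  rw [MvPolynomial.smul_eq_C_mul, MvPolynomial.X_pow_eq_monomial, MvPolynomial.C_mul_monomial,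
    mul_one]

lemma coeff_prod_aeval {n : ℕ} (p : Fin n → ℝ[X]) (γ : Fin n →₀ ℕ) :
    MvPolynomial.coeff γ (∏ i, Polynomial.aeval (MvPolynomial.X (R := ℝ) i) (p i))
      = ∏ i, (p i).coeff (γ i) := by
  classical
  simp_rw [aeval_X_eq_sum]
  rw [Finset.prod_univ_sum]
  simp_rw [prod_monomial', univ_sum_single]
  rw [MvPolynomial.coeff_sum]
  simp_rw [MvPolynomial.coeff_monomial]
  by_cases hγ : (⇑γ : Fin n → ℕ) ∈ Fintype.piFinset (fun i => range ((p i).natDegree + 1))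
  · rw [Finset.sum_eq_single (⇑γ : Fin n → ℕ)]
    · simp
    · intro t _ ht
      rw [if_neg]
      intro h
      exact ht (by simpa [Finsupp.equivFunOnFinite] using congrArg Finsupp.equivFunOnFinite h)
    · intro h; exact absurd hγ h
  · rw [Finset.sum_eq_zero, eq_comm]
    · obtain ⟨i, hi⟩ : ∃ i, ¬ γ i < (p i).natDegree + 1 := by
        simpa [Fintype.mem_piFinset] using hγ
      exact Finset.prod_eq_zero (Finset.mem_univ i)
        (Polynomial.coeff_eq_zero_of_natDegree_lt (by omega))
    · intro t ht
      rw [if_neg]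
      intro h
      apply hγ
      have : (⇑γ : Fin n → ℕ) = t := by
        have := congrArg Finsupp.equivFunOnFinite h; simpa [Finsupp.equivFunOnFinite] using this.symm
      rwa [this]

lemma two_X_mul_T (k : ℤ) : (2:ℝ[X]) * Polynomial.X * chebTz k = chebTz (k+1) + chebTz (k-1) := by
  have h := Polynomial.Chebyshev.T_mul_T ℝ 1 k
  rw [Polynomial.Chebyshev.T_one] at h
  rw [show (1:ℤ) + k = k + 1 by ring, show (1:ℤ) - k = -(k-1) by ring,
    Polynomial.Chebyshev.T_neg] at h
  exact h

lemma pascal_sum (k : ℕ) :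
    ∑ i ∈ range (k+2), chCoe (k+1) i * chebTz ((k:ℤ)+1-2*i)
      = ∑ i ∈ range (k+1), chCoe k i * (chebTz ((k:ℤ)+1-2*i) + chebTz ((k:ℤ)-1-2*i)) := by
  have shift : ∑ i ∈ range (k+1), chCoe k (i+1) * chebTz ((k:ℤ)+1-2*((i+1:ℕ):ℤ)) + chebTz ((k:ℤ)+1)
      = ∑ i ∈ range (k+1), chCoe k i * chebTz ((k:ℤ)+1-2*(i:ℤ)) := by
    have h0 : chebTz ((k:ℤ)+1) = chCoe k 0 * chebTz ((k:ℤ)+1-2*((0:ℕ):ℤ)) := by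
      simp [chCoe]
    rw [h0, ← Finset.sum_range_succ' (fun i : ℕ => chCoe k i * chebTz ((k:ℤ)+1-2*(i:ℤ))) (k+1),
      Finset.sum_range_succ _ (k+1)]
    simp [chCoe, Nat.choose_eq_zero_of_lt (lt_add_one k)]
  calc ∑ i ∈ range (k+2), chCoe (k+1) i * chebTz ((k:ℤ)+1-2*i)
      = ∑ i ∈ range (k+1), chCoe (k+1) (i+1) * chebTz ((k:ℤ)+1-2*((i+1:ℕ):ℤ))
          + chCoe (k+1) 0 * chebTz ((k:ℤ)+1-2*((0:ℕ):ℤ)) :=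
        Finset.sum_range_succ' (fun i : ℕ => chCoe (k+1) i * chebTz ((k:ℤ)+1-2*(i:ℤ))) (k+1)
    _ = ∑ i ∈ range (k+1), (chCoe k i * chebTz ((k:ℤ)-1-2*i)
          + chCoe k (i+1) * chebTz ((k:ℤ)+1-2*((i+1:ℕ):ℤ))) + chebTz ((k:ℤ)+1) := by
        congr 1
        · refine Finset.sum_congr rfl fun i _ => ?_
          have hidx : (k:ℤ)+1-2*((i+1:ℕ):ℤ) = (k:ℤ)-1-2*i := by push_cast; ring
          rw [chCoe, Nat.choose_succ_succ, Nat.cast_add, map_add, add_mul, hidx]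
        · simp [chCoe]
    _ = (∑ i ∈ range (k+1), chCoe k i * chebTz ((k:ℤ)-1-2*i))
          + ((∑ i ∈ range (k+1), chCoe k (i+1) * chebTz ((k:ℤ)+1-2*((i+1:ℕ):ℤ)))
            + chebTz ((k:ℤ)+1)) := by
        rw [Finset.sum_add_distrib]; ring
    _ = (∑ i ∈ range (k+1), chCoe k i * chebTz ((k:ℤ)-1-2*i))
          + ∑ i ∈ range (k+1), chCoe k i * chebTz ((k:ℤ)+1-2*(i:ℤ)) := by rw [shift]
    _ = ∑ i ∈ range (k+1), chCoe k i * (chebTz ((k:ℤ)+1-2*i) + chebTz ((k:ℤ)-1-2*i)) := by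
        rw [← Finset.sum_add_distrib]
        refine Finset.sum_congr rfl fun i _ => by ring

lemma X_pow_expand (k : ℕ) : Polynomial.C ((2:ℝ)^k) * Polynomial.X^k
    = ∑ i ∈ range (k+1), chCoe k i * chebTz ((k:ℤ) - 2*i) := by
  induction k with
  | zero => simp [chCoe, Polynomial.Chebyshev.T_zero]
  | succ k ih =>
    have lhs_eq : Polynomial.C ((2:ℝ)^(k+1)) * Polynomial.X^(k+1)
        = (2 * Polynomial.X) * (Polynomial.C ((2:ℝ)^k) * Polynomial.X^k) := by
      rw [pow_succ, pow_succ, map_mul, show Polynomial.C (2:ℝ) = (2:ℝ[X]) from map_ofNat _ 2]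
      ring
    have step : ∀ i ∈ range (k+1), (2 * Polynomial.X) * (chCoe k i * chebTz ((k:ℤ) - 2*i))
        = chCoe k i * (chebTz ((k:ℤ) + 1 - 2*i) + chebTz ((k:ℤ) - 1 - 2*i)) := by
      intro i _
      rw [show (2 * Polynomial.X) * (chCoe k i * chebTz ((k:ℤ) - 2*i))
          = chCoe k i * ((2:ℝ[X]) * Polynomial.X * chebTz ((k:ℤ) - 2*i)) by ring,
        two_X_mul_T, show (k:ℤ) - 2*i + 1 = (k:ℤ) + 1 - 2*i by ring,
        show (k:ℤ) - 2*i - 1 = (k:ℤ) - 1 - 2*i by ring]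
    calc Polynomial.C ((2:ℝ)^(k+1)) * Polynomial.X^(k+1)
        = ∑ i ∈ range (k+1), (2 * Polynomial.X) * (chCoe k i * chebTz ((k:ℤ) - 2*i)) := by
          rw [lhs_eq, ih, Finset.mul_sum]
      _ = ∑ i ∈ range (k+1), chCoe k i * (chebTz ((k:ℤ) + 1 - 2*i) + chebTz ((k:ℤ) - 1 - 2*i)) :=
          Finset.sum_congr rfl step
      _ = ∑ i ∈ range (k+2), chCoe (k+1) i * chebTz ((k:ℤ)+1-2*i) := (pascal_sum k).symm
      _ = ∑ i ∈ range (k+1+1), chCoe (k+1) i * chebTz (((k+1:ℕ):ℤ) - 2*i) := by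
          refine Finset.sum_congr rfl fun i _ => ?_
          norm_cast

end ChebAux

/-- Multivariate Chebyshev polynomial `T_α(x) = ∏_i T_{α i}(x_i)`,
where `T_k` is the `k`-th Chebyshev polynomial of the first kind. -/
noncomputable def chebT {n : ℕ} (α : Fin n → ℕ) : MvPolynomial (Fin n) ℝ :=
  ∏ i, Polynomial.aeval (MvPolynomial.X i) (Polynomial.Chebyshev.T ℝ (α i))

section ChebAux2

open Polynomial Finset

lemma coeff_chebT {n : ℕ} (α β : Fin n → ℕ) :
    MvPolynomial.coeff (Finsupp.equivFunOnFinite.symm β) (chebT α)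
      = ∏ i, (Polynomial.Chebyshev.T ℝ (α i)).coeff (β i) := by
  rw [chebT, coeff_prod_aeval]
  simp [Finsupp.coe_equivFunOnFinite_symm]

lemma chebT_linearIndependent (n : ℕ) :
    LinearIndependent ℝ (chebT (n := n)) := by
  rw [linearIndependent_iff]
  intro l hl
  by_contra hne
  have hsupp : l.support.Nonempty := Finsupp.support_nonempty_iff.mpr hne
  obtain ⟨m, hm, hmax⟩ := Finset.exists_maximal hsupp
  have hco := congrArg (MvPolynomial.coeff (Finsupp.equivFunOnFinite.symm m)) hl
  rw [Finsupp.linearCombination_apply, Finsupp.sum, MvPolynomial.coeff_sum] at hco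
  simp only [MvPolynomial.coeff_smul, MvPolynomial.coeff_zero] at hco
  rw [Finset.sum_eq_single m] at hco
  · have : (MvPolynomial.coeff (Finsupp.equivFunOnFinite.symm m) (chebT m)) ≠ 0 := by
      rw [coeff_chebT]
      exact Finset.prod_ne_zero_iff.mpr fun i _ => T_coeff_self_ne (m i)
    rcases mul_eq_zero.mp hco with h | h
    · exact absurd h (Finsupp.mem_support_iff.mp hm)
    · exact this h
  · intro α hα hne'
    by_cases hle : m ≤ α
    · exact absurd (le_antisymm (hmax hα hle) hle) hne'
    · obtain ⟨i, hi⟩ : ∃ i, α i < m i := by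
        by_contra h
        push_neg at h
        exact hle fun i => h i
      rw [coeff_chebT, Finset.prod_eq_zero (Finset.mem_univ i)
        (T_coeff_zero_of_lt (α i) (m i) hi), smul_eq_mul, mul_zero]
  · intro h; exact absurd hm h

lemma X_i_pow_expand {n : ℕ} (i : Fin n) (k : ℕ) :
    (MvPolynomial.C (2:ℝ))^k * (MvPolynomial.X i)^k
      = ∑ t ∈ range (k+1), MvPolynomial.C ((k.choose t : ℝ))
          * Polynomial.aeval (MvPolynomial.X (R := ℝ) i) (chebTz ((k:ℤ) - 2*t)) := by
  have h := congrArg (Polynomial.aeval (MvPolynomial.X (R := ℝ) i)) (X_pow_expand k)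
  simp only [map_mul, map_pow, map_sum, Polynomial.aeval_C, Polynomial.aeval_X,
    MvPolynomial.algebraMap_eq, chCoe] at h
  exact h

lemma monomial_expand {n : ℕ} (m : Fin n →₀ ℕ) :
    MvPolynomial.C ((2:ℝ)^(∑ i, m i)) * MvPolynomial.monomial m (1:ℝ)
      = ∑ t ∈ Fintype.piFinset (fun i => range (m i + 1)),
          MvPolynomial.C (∏ i, ((m i).choose (t i) : ℝ))
            * chebT (fun i => ((m i : ℤ) - 2 * t i).natAbs) := by
  have hm : MvPolynomial.monomial m (1:ℝ) = ∏ i, (MvPolynomial.X i)^(m i) := by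
    rw [MvPolynomial.monomial_eq, MvPolynomial.C_1, one_mul]
    exact Finsupp.prod_fintype _ _ (fun i => pow_zero _)
  have lhs_eq : MvPolynomial.C ((2:ℝ)^(∑ i, m i)) * MvPolynomial.monomial m (1:ℝ)
      = ∏ i, ((MvPolynomial.C (2:ℝ))^(m i) * (MvPolynomial.X i)^(m i)) := by
    rw [Finset.prod_mul_distrib, Finset.prod_pow_eq_pow_sum, ← hm, ← map_pow]
  rw [lhs_eq]
  simp_rw [X_i_pow_expand]
  rw [Finset.prod_univ_sum]
  refine Finset.sum_congr rfl fun t _ => ?_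
  rw [Finset.prod_mul_distrib, ← map_prod, chebT]
  congr 1
  refine Finset.prod_congr rfl fun i _ => ?_
  congr 1
  rw [Polynomial.Chebyshev.T_natAbs]

end ChebAux2

section Main

open Finset

variable {n : ℕ}

/-- The Chebyshev coefficient finsupp of a monomial. -/
noncomputable def chebE (m : Fin n →₀ ℕ) : (Fin n → ℕ) →₀ ℝ :=
  ∑ t ∈ Fintype.piFinset (fun i => range (m i + 1)),
    Finsupp.single (fun i => ((m i : ℤ) - 2 * t i).natAbs)
      ((∏ i, ((m i).choose (t i) : ℝ)) / 2 ^ (∑ i, m i))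

lemma chebE_comb (m : Fin n →₀ ℕ) :
    Finsupp.linearCombination ℝ chebT (chebE m) = MvPolynomial.monomial m (1:ℝ) := by
  rw [chebE, map_sum]
  have h2 : ((2:ℝ) ^ (∑ i, m i)) ≠ 0 := by positivity
  have := monomial_expand m
  have key : MvPolynomial.monomial m (1:ℝ)
      = ∑ t ∈ Fintype.piFinset (fun i => range (m i + 1)),
          ((∏ i, ((m i).choose (t i) : ℝ)) / 2 ^ (∑ i, m i))
            • chebT (fun i => ((m i : ℤ) - 2 * t i).natAbs) := by
    have := congrArg (fun p => ((2:ℝ) ^ (∑ i, m i))⁻¹ • p) (monomial_expand m)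
    rw [← MvPolynomial.smul_eq_C_mul, smul_smul, inv_mul_cancel₀ h2, one_smul] at this
    rw [this, Finset.smul_sum]
    refine Finset.sum_congr rfl fun t _ => ?_
    rw [← MvPolynomial.smul_eq_C_mul, smul_smul]
    congr 1
    field_simp
  rw [key]
  refine Finset.sum_congr rfl fun t _ => ?_
  rw [Finsupp.linearCombination_single]

lemma chebE_nonneg (m : Fin n →₀ ℕ) (α : Fin n → ℕ) : 0 ≤ chebE m α := by
  rw [chebE, Finsupp.finset_sum_apply]
  refine Finset.sum_nonneg fun t _ => ?_
  rw [Finsupp.single_apply]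
  split
  · positivity
  · exact le_rfl

lemma chebE_l1 (m : Fin n →₀ ℕ) (S : Finset (Fin n → ℕ)) :
    ∑ α ∈ S, |chebE m α| ≤ 1 := by
  have h2 : (0:ℝ) < 2 ^ (∑ i, m i) := by positivity
  have habs : ∀ α ∈ S, |chebE m α| = chebE m α := fun α _ => abs_of_nonneg (chebE_nonneg m α)
  rw [Finset.sum_congr rfl habs]
  have expand : ∀ α, chebE m α
      = ∑ t ∈ Fintype.piFinset (fun i => range (m i + 1)),
          (Finsupp.single (fun i => ((m i : ℤ) - 2 * t i).natAbs)
            ((∏ i, ((m i).choose (t i) : ℝ)) / 2 ^ (∑ i, m i))) α := fun α => by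
    rw [chebE, Finsupp.finset_sum_apply]
  calc ∑ α ∈ S, chebE m α
      = ∑ t ∈ Fintype.piFinset (fun i => range (m i + 1)), ∑ α ∈ S,
          (Finsupp.single (fun i => ((m i : ℤ) - 2 * t i).natAbs)
            ((∏ i, ((m i).choose (t i) : ℝ)) / 2 ^ (∑ i, m i))) α := by
        rw [Finset.sum_congr rfl fun α _ => expand α, Finset.sum_comm]
    _ ≤ ∑ t ∈ Fintype.piFinset (fun i => range (m i + 1)),
          ((∏ i, ((m i).choose (t i) : ℝ)) / 2 ^ (∑ i, m i)) := by
        refine Finset.sum_le_sum fun t _ => ?_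
        simp_rw [Finsupp.single_apply]
        rw [Finset.sum_ite_eq]
        split
        · exact le_rfl
        · positivity
    _ = 1 := by
        rw [← Finset.sum_div]
        have hps := Finset.prod_univ_sum (fun i : Fin n => range (m i + 1))
          (fun i j => (((m i).choose j):ℝ))
        rw [← hps, div_eq_one_iff_eq (ne_of_gt h2)]
        have : ∀ i : Fin n, ∑ j ∈ range (m i + 1), (((m i).choose j : ℝ)) = 2 ^ (m i) := by
          intro i
          rw [← Nat.cast_sum, Nat.sum_range_choose]
          push_cast; ring
        rw [Finset.prod_congr rfl fun i _ => this i, Finset.prod_pow_eq_pow_sum]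

end Main

/-- If `f = ∑_α c_α T_α` is the expansion of `f` in the (multivariate) Chebyshev
basis, then the 1-norm of the Chebyshev coefficients is at most the 1-norm of the
coefficients of `f` in the monomial basis. -/
theorem cheb_one_norm_le_monomial_one_norm (n : ℕ) (f : MvPolynomial (Fin n) ℝ)
    (c : (Fin n → ℕ) →₀ ℝ)
    (hc : f = c.sum fun α a => MvPolynomial.C a * chebT α) :
    (c.sum fun _ a => |a|) ≤ ∑ m ∈ f.support, |f.coeff m| := by
  classical
  set D : (Fin n → ℕ) →₀ ℝ := ∑ m ∈ f.support, f.coeff m • chebE m with hD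
  have hDcomb : Finsupp.linearCombination ℝ chebT D = f := by
    rw [hD, map_sum]
    have : ∀ m ∈ f.support, Finsupp.linearCombination ℝ chebT (f.coeff m • chebE m)
        = MvPolynomial.monomial m (f.coeff m) := by
      intro m _
      rw [map_smul, chebE_comb, MvPolynomial.smul_eq_C_mul, MvPolynomial.C_mul_monomial, mul_one]
    rw [Finset.sum_congr rfl this]
    exact (MvPolynomial.as_sum f).symm
  have hccomb : Finsupp.linearCombination ℝ chebT c = f := by
    rw [hc, Finsupp.linearCombination_apply]
    exact Finsupp.sum_congr fun α _ => MvPolynomial.smul_eq_C_mul _ _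
  have hcD : c = D := by
    have hli := chebT_linearIndependent n
    rw [linearIndependent_iff] at hli
    have : Finsupp.linearCombination ℝ chebT (c - D) = 0 := by
      rw [map_sub, hDcomb, hccomb, sub_self]
    have := hli _ this
    exact sub_eq_zero.mp this
  have hl1 : (c.sum fun _ a => |a|) = ∑ α ∈ c.support, |c α| := rfl
  rw [hl1]
  calc ∑ α ∈ c.support, |c α|
      = ∑ α ∈ c.support, |∑ m ∈ f.support, f.coeff m * chebE m α| := by
        refine Finset.sum_congr rfl fun α _ => ?_
        rw [hcD, hD, Finsupp.finset_sum_apply]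
        simp_rw [Finsupp.smul_apply, smul_eq_mul]
    _ ≤ ∑ α ∈ c.support, ∑ m ∈ f.support, |f.coeff m| * |chebE m α| := by
        refine Finset.sum_le_sum fun α _ => ?_
        refine le_trans (Finset.abs_sum_le_sum_abs _ _) ?_
        refine Finset.sum_le_sum fun m _ => ?_
        rw [abs_mul]
    _ = ∑ m ∈ f.support, |f.coeff m| * ∑ α ∈ c.support, |chebE m α| := by
        rw [Finset.sum_comm]
        refine Finset.sum_congr rfl fun m _ => ?_
        rw [Finset.mul_sum]
    _ ≤ ∑ m ∈ f.support, |f.coeff m| * 1 := by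
        refine Finset.sum_le_sum fun m _ => ?_
        exact mul_le_mul_of_nonneg_left (chebE_l1 m c.support) (abs_nonneg _)
    _ = ∑ m ∈ f.support, |f.coeff m| := by simp
end

section
/- For every k ∈ ℕ, both univariate polynomials 1 + T_k(t) and 1 − T_k(t) belong to the truncated pre-ordering 𝒯(1−t, 1+t)_k. -/
/-!
Write `k = 2m` or `k = 2m + 1`. The product formulas `2 T_m T_n = T_{m+n} + T_{m-n}` and
`2 (1 - t²) U_a U_b = T_{a-b} - T_{a+b+2}` give the four certificates
`1 + T_{2m} = 2 T_m²`, `1 - T_{2m} = 2 U_{m-1}² (1 - t)(1 + t)`,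
`1 + T_{2m+1} = (U_m - U_{m-1})² (1 + t)` and `1 - T_{2m+1} = (U_m + U_{m-1})² (1 - t)`,
each a single term of the pre-ordering. The degree bound is automatic: that term equals
`1 ± T_k`, of degree at most `k`.
-/

/-- Truncated pre-ordering generated by univariate polynomials `g i`, with degree
bound `r`: sums `∑_{I ⊆ ι} σ_I ∏_{i ∈ I} g i` with each `σ_I` a sum of squares and
each term `σ_I ∏_{i ∈ I} g i` of degree at most `r`. -/
def truncPreUniv {ι : Type} [Fintype ι] [DecidableEq ι]
    (g : ι → Polynomial ℝ) (r : ℕ) : Set (Polynomial ℝ) :=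
  {p | ∃ s : Finset ι → Polynomial ℝ,
    (∀ I, IsSumSq (s I)) ∧
    (∀ I : Finset ι, (s I * ∏ i ∈ I, g i).natDegree ≤ r) ∧
    p = ∑ I : Finset ι, s I * ∏ i ∈ I, g i}

theorem IsSumSq.two_mul_sq {R : Type*} [CommSemiring R] (a : R) : IsSumSq (2 * a ^ 2) := by
  rw [two_mul]
  exact (IsSquare.sq a).isSumSq.add (IsSquare.sq a).isSumSq

theorem mem_truncPreUniv_of_eq_mul_prod {ι : Type} [Fintype ι] [DecidableEq ι]
    {g : ι → Polynomial ℝ} {r : ℕ} {p σ : Polynomial ℝ} (I : Finset ι) (hσ : IsSumSq σ)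
    (hp : p = σ * ∏ i ∈ I, g i) (hr : p.natDegree ≤ r) : p ∈ truncPreUniv g r := by
  subst hp
  refine ⟨fun J => if J = I then σ else 0, fun J => ?_, fun J => ?_, ?_⟩ <;> dsimp only
  · split_ifs
    exacts [hσ, IsSumSq.zero]
  · split_ifs with h
    · exact h ▸ hr
    · simp
  · simp [ite_mul, Finset.sum_ite_eq']

namespace Polynomial

variable {R : Type*} [CommRing R]

instance [NeZero (2 : R)] : NeZero (2 : R[X]) :=
  ⟨by rw [← C_ofNat]; exact C_ne_zero.mpr two_ne_zero⟩

variable [Nontrivial R]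

theorem one_sub_X_ne_zero : (1 - X : R[X]) ≠ 0 := by
  rw [← neg_sub, neg_ne_zero, ← C_1]
  exact X_sub_C_ne_zero 1

theorem one_add_X_ne_zero : (1 + X : R[X]) ≠ 0 := by
  rw [add_comm, ← C_1]
  exact X_add_C_ne_zero 1

end Polynomial

namespace Polynomial.Chebyshev

variable (R : Type*) [CommRing R]

theorem two_mul_T_mul_U (m n : ℤ) : 2 * T R m * U R n = U R (n + m) + U R (n - m) := by
  induction m using Polynomial.Chebyshev.induct with
  | zero => simp [two_mul]
  | one => rw [U_add_one, T_one]; ring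
  | add_two m ih1 ih2 =>
    linear_combination (norm := ring_nf) 2 * U R n * T_add_two R m - U_sub_two R (n - m)
      - U_add_two R (n + m) - ih2 + 2 * (X : R[X]) * ih1
  | neg_add_one m ih1 ih2 =>
    linear_combination (norm := ring_nf) 2 * U R n * T_add_two R (-m - 1)
      - U_sub_two R (n - (-m - 1)) - U_add_two R (n + (-m - 1)) - ih2 + 2 * (X : R[X]) * ih1

theorem two_mul_one_sub_X_sq_mul_U_mul_U (a b : ℤ) :
    2 * (1 - X ^ 2) * U R a * U R b = T R (a - b) - T R (a + b + 2) := by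
  linear_combination (norm := ring_nf) 2 * U R a * one_sub_X_sq_mul_U_eq_pol_in_T R b
    + X * two_mul_T_mul_U R (b + 1) a - two_mul_T_mul_U R (b + 2) a
    - U_eq_X_mul_U_add_T R (a + b + 1) + U_eq_X_mul_U_add_T R (a - b - 1) - U_sub_two R (a - b)

theorem one_add_T_two_mul (m : ℤ) : 1 + T R (2 * m) = 2 * T R m ^ 2 := by
  linear_combination (norm := ring_nf) -T_mul_T R m m - T_zero R

theorem one_sub_T_two_mul (m : ℤ) :
    1 - T R (2 * m) = 2 * U R (m - 1) ^ 2 * ((1 - X) * (1 + X)) := by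
  linear_combination (norm := ring_nf)
    -two_mul_one_sub_X_sq_mul_U_mul_U R (m - 1) (m - 1) - T_zero R

variable [IsDomain R] [NeZero (2 : R)]

theorem one_add_T_two_mul_add_one (m : ℤ) :
    1 + T R (2 * m + 1) = (U R m - U R (m - 1)) ^ 2 * (1 + X) := by
  refine mul_left_cancel₀ (mul_ne_zero two_ne_zero one_sub_X_ne_zero) ?_
  linear_combination (norm := ring_nf) -two_mul_one_sub_X_sq_mul_U_mul_U R m m
    + 2 * two_mul_one_sub_X_sq_mul_U_mul_U R m (m - 1)
    - two_mul_one_sub_X_sq_mul_U_mul_U R (m - 1) (m - 1) - T_mul_T R (2 * m + 1) 1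
    + 2 * (T R (2 * m + 1) + 1) * T_one R - 2 * T_zero R

theorem one_sub_T_two_mul_add_one (m : ℤ) :
    1 - T R (2 * m + 1) = (U R m + U R (m - 1)) ^ 2 * (1 - X) := by
  refine mul_left_cancel₀ (mul_ne_zero two_ne_zero one_add_X_ne_zero) ?_
  linear_combination (norm := ring_nf) -two_mul_one_sub_X_sq_mul_U_mul_U R m m
    - 2 * two_mul_one_sub_X_sq_mul_U_mul_U R m (m - 1)
    - two_mul_one_sub_X_sq_mul_U_mul_U R (m - 1) (m - 1) - T_mul_T R (2 * m + 1) 1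
    + 2 * (T R (2 * m + 1) - 1) * T_one R - 2 * T_zero R

theorem natDegree_one_add_T_le (n : ℕ) : (1 + T R n).natDegree ≤ n :=
  (natDegree_add_le _ _).trans (by simp)

theorem natDegree_one_sub_T_le (n : ℕ) : (1 - T R n).natDegree ≤ n :=
  (natDegree_sub_le _ _).trans (by simp)

end Polynomial.Chebyshev

open Finset Polynomial Polynomial.Chebyshev in
/-- For every `k`, both `1 + T_k` and `1 − T_k` lie in the truncated pre-ordering
`𝒯(1−t, 1+t)_k`, where `T_k` is the `k`-th Chebyshev polynomial of the first kind. -/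
theorem one_add_chebyshev_mem_truncPre (k : ℕ) :
    1 + Polynomial.Chebyshev.T ℝ k ∈
      truncPreUniv ![1 - Polynomial.X, 1 + Polynomial.X] k ∧
    1 - Polynomial.Chebyshev.T ℝ k ∈
      truncPreUniv ![1 - Polynomial.X, 1 + Polynomial.X] k := by
  obtain ⟨m, rfl | rfl⟩ := Nat.even_or_odd' k
  · refine ⟨mem_truncPreUniv_of_eq_mul_prod ∅ (.two_mul_sq (T ℝ m)) ?_
        (natDegree_one_add_T_le ℝ _),
      mem_truncPreUniv_of_eq_mul_prod univ (.two_mul_sq (U ℝ (m - 1))) ?_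
        (natDegree_one_sub_T_le ℝ _)⟩
    · simpa using one_add_T_two_mul ℝ m
    · simpa [Fin.prod_univ_two] using one_sub_T_two_mul ℝ m
  · refine ⟨mem_truncPreUniv_of_eq_mul_prod {1}
        (IsSquare.sq (U ℝ m - U ℝ (m - 1))).isSumSq ?_
        (natDegree_one_add_T_le ℝ _),
      mem_truncPreUniv_of_eq_mul_prod {0}
        (IsSquare.sq (U ℝ m + U ℝ (m - 1))).isSumSq ?_
        (natDegree_one_sub_T_le ℝ _)⟩
    · simpa using one_add_T_two_mul_add_one ℝ m
    · simpa using one_sub_T_two_mul_add_one ℝ m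
end

section
/- For every multi-index α ∈ ℕ^n, both polynomials 1 + T_α(x) and 1 − T_α(x) belong to the truncated pre-ordering 𝒯(1±x_1,...,1±x_n)_{|α|}, where |α| = Σ_i α_i. -/
open MvPolynomial

/-- Truncated pre-ordering generated by the polynomials `g i`, with degree bound `r`. -/
def truncPre {σ ι : Type} [Fintype ι] [DecidableEq ι]
    (g : ι → MvPolynomial σ ℝ) (r : ℕ) : Set (MvPolynomial σ ℝ) :=
  {p | ∃ s : Finset ι → MvPolynomial σ ℝ,
    (∀ I, IsSumSq (s I)) ∧
    (∀ I : Finset ι, (s I * ∏ i ∈ I, g i).totalDegree ≤ r) ∧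
    p = ∑ I : Finset ι, s I * ∏ i ∈ I, g i}

/-- The `2n` generators `1 ± x_i`, indexed by a variable together with a sign. -/
noncomputable def pmGen {σ : Type} (v : σ × Bool) : MvPolynomial σ ℝ :=
  if v.2 then 1 + MvPolynomial.X v.1 else 1 - MvPolynomial.X v.1

open Polynomial Polynomial.Chebyshev

variable (R : Type*) [CommRing R]

theorem T_mul_U (b a : ℤ) : 2 * T R a * U R b = U R (b + a) + U R (b - a) := by
  induction a using Polynomial.Chebyshev.induct with
  | zero => simp [two_mul]
  | one =>
    rw [T_one]
    linear_combination (norm := ring_nf) - U_add_one R b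
  | add_two a ih1 ih2 =>
    have h₁ := U_add_two R (b + a)
    have h₂ := U_sub_two R (b - a)
    have h₃ := T_add_two R a
    linear_combination (norm := ring_nf) 2 * U R b * h₃ - h₁ - h₂ - ih2 + 2 * (Polynomial.X : R[X]) * ih1
  | neg_add_one a ih1 ih2 =>
    have h₁ := U_add_two R (b + (-a - 1))
    have h₂ := U_sub_two R (b - (-a - 1))
    have h₃ := T_add_two R (-a - 1)
    linear_combination (norm := ring_nf) 2 * U R b * h₃ - h₁ - h₂ - ih2 + 2 * (Polynomial.X : R[X]) * ih1

theorem U_mul_U (a b : ℤ) :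
    2 * ((1 - Polynomial.X ^ 2) * U R a * U R b) = T R (a - b) - T R (a + b + 2) := by
  induction b using Polynomial.Chebyshev.induct with
  | zero =>
    rw [U_zero]
    have h := one_sub_X_sq_mul_U_eq_pol_in_T R a
    have h₂ := T_add_two R a
    linear_combination (norm := ring_nf) 2 * h - h₂
  | one =>
    rw [U_one]
    have h := one_sub_X_sq_mul_U_eq_pol_in_T R a
    have h1 := T_add_two R a
    have h2 := T_sub_one R a
    have h3 := T_add_two R (a + 1)
    linear_combination (norm := ring_nf) 4 * (Polynomial.X : R[X]) * h - h2 + h3 - 2 * (Polynomial.X : R[X]) * h1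
  | add_two b ih1 ih2 =>
    have h₁ := T_sub_two R (a - b)
    have h₂ := T_add_two R (a + b + 2)
    have h₃ := U_add_two R b
    linear_combination (norm := ring_nf)
      2 * ((1 - (Polynomial.X : R[X]) ^ 2) * U R a) * h₃ + 2 * (Polynomial.X : R[X]) * ih1 - ih2 - h₁ + h₂
  | neg_add_one b ih1 ih2 =>
    have h₁ := T_add_two R (a - (-b - 1) - 2)
    have h₂ := T_add_two R (a + (-b - 1))
    have h₄ := T_add_two R (a + (-b - 1) + 2)
    have h₃ := U_add_two R (-b - 1)
    linear_combination (norm := ring_nf)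
      2 * ((1 - (Polynomial.X : R[X]) ^ 2) * U R a) * h₃ + 2 * (Polynomial.X : R[X]) * ih1 - ih2 - h₁ + h₄

theorem cheb_even_add (m : ℤ) : 1 + T ℝ (2 * m) = 2 * T ℝ m ^ 2 := by
  have h := T_mul_T ℝ m m
  rw [show m - m = 0 from sub_self m, T_zero, show m + m = 2 * m by ring] at h
  linear_combination -h

theorem cheb_even_sub (m : ℤ) : 1 - T ℝ (2 * m) = 2 * ((1 - T ℝ m) * (1 + T ℝ m)) := by
  have h := T_mul_T ℝ m m
  rw [show m - m = 0 from sub_self m, T_zero, show m + m = 2 * m by ring] at h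
  linear_combination h

theorem cheb_odd_sub (m : ℤ) :
    1 - T ℝ (2 * m + 1) = (1 - Polynomial.X) * (U ℝ m + U ℝ (m - 1)) ^ 2 := by
  have hc : (Polynomial.X + 1 : ℝ[X]) ≠ 0 := fun h => by simpa using congrArg (eval 0) h
  have hc2 : (2 : ℝ[X]) ≠ 0 := fun h => by simpa using congrArg (eval 0) h
  apply mul_left_cancel₀ hc2
  apply mul_left_cancel₀ hc
  have h1 := U_mul_U ℝ m m
  rw [show m - m = 0 from sub_self m, T_zero, show m + m + 2 = 2 * m + 2 by ring] at h1
  have h2 := U_mul_U ℝ m (m - 1)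
  rw [show m - (m - 1) = 1 by ring, T_one, show m + (m - 1) + 2 = 2 * m + 1 by ring] at h2
  have h3 := U_mul_U ℝ (m - 1) (m - 1)
  rw [show m - 1 - (m - 1) = 0 by ring, T_zero,
    show m - 1 + (m - 1) + 2 = 2 * m by ring] at h3
  have h4 := T_mul_T ℝ (2 * m + 1) 1
  rw [T_one, show 2 * m + 1 + 1 = 2 * m + 2 by ring,
    show 2 * m + 1 - 1 = 2 * m by ring] at h4
  linear_combination (norm := ring_nf) - h1 - 2 * h2 - h3 - h4

theorem cheb_odd_add (m : ℤ) :
    1 + T ℝ (2 * m + 1) = (1 + Polynomial.X) * (U ℝ m - U ℝ (m - 1)) ^ 2 := by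
  have hc : (1 - Polynomial.X : ℝ[X]) ≠ 0 := fun h => by simpa using congrArg (eval 0) h
  have hc2 : (2 : ℝ[X]) ≠ 0 := fun h => by simpa using congrArg (eval 0) h
  apply mul_left_cancel₀ hc2
  apply mul_left_cancel₀ hc
  have h1 := U_mul_U ℝ m m
  rw [show m - m = 0 from sub_self m, T_zero, show m + m + 2 = 2 * m + 2 by ring] at h1
  have h2 := U_mul_U ℝ m (m - 1)
  rw [show m - (m - 1) = 1 by ring, T_one, show m + (m - 1) + 2 = 2 * m + 1 by ring] at h2
  have h3 := U_mul_U ℝ (m - 1) (m - 1)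
  rw [show m - 1 - (m - 1) = 0 by ring, T_zero,
    show m - 1 + (m - 1) + 2 = 2 * m by ring] at h3
  have h4 := T_mul_T ℝ (2 * m + 1) 1
  rw [T_one, show 2 * m + 1 + 1 = 2 * m + 2 by ring,
    show 2 * m + 1 - 1 = 2 * m by ring] at h4
  linear_combination (norm := ring_nf) - h1 + 2 * h2 - h3 - h4

theorem natDegree_U_le : ∀ n : ℕ, (U ℝ (n : ℤ)).natDegree ≤ n := by
  intro n
  induction n using Nat.strong_induction_on with
  | _ n ih =>
    match n with
    | 0 => simp [U_zero]
    | 1 =>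
      rw [Nat.cast_one, U_one]
      exact le_trans (natDegree_mul_le) (by simp)
    | (k + 2) =>
      have h1 := ih (k + 1) (by omega)
      have h2 := ih k (by omega)
      rw [show ((k + 2 : ℕ) : ℤ) = (k : ℤ) + 2 by push_cast; ring, U_add_two]
      refine le_trans (natDegree_sub_le _ _) (max_le ?_ ?_)
      · refine le_trans (natDegree_mul_le) ?_
        have : ((k : ℤ) + 1) = ((k + 1 : ℕ) : ℤ) := by push_cast; ring
        rw [this]
        refine le_trans (add_le_add (natDegree_mul_le) h1) ?_
        simp
        omega
      · omega

theorem natDegree_U_le' : ∀ n : ℕ, (U ℝ ((n : ℤ) - 1)).natDegree ≤ n := by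
  intro n
  match n with
  | 0 => simp [U_neg_one]
  | (k + 1) =>
    have := natDegree_U_le k
    rw [show ((k + 1 : ℕ) : ℤ) - 1 = (k : ℤ) by push_cast; ring]
    omega

theorem natDegree_T_le : ∀ n : ℕ, (T ℝ (n : ℤ)).natDegree ≤ n := by
  intro n
  match n with
  | 0 => simp
  | (k + 1) =>
    have h := T_eq_U_sub_X_mul_U ℝ ((k : ℤ) + 1)
    rw [show ((k + 1 : ℕ) : ℤ) = (k : ℤ) + 1 by push_cast; ring, h]
    refine le_trans (natDegree_sub_le _ _) (max_le ?_ ?_)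
    · have : ((k : ℤ) + 1) = ((k + 1 : ℕ) : ℤ) := by push_cast; ring
      rw [this]
      exact le_trans (natDegree_U_le (k + 1)) le_rfl
    · refine le_trans (natDegree_mul_le) ?_
      rw [show (k : ℤ) + 1 - 1 = ((k : ℕ) : ℤ) by ring]
      have := natDegree_U_le k
      simp only [natDegree_X]
      omega


section SOS

variable {A : Type*} [CommRing A]

theorem isSumSq_mul_sq {a : A} (b : A) (ha : IsSumSq a) : IsSumSq (b * b * a) := by
  induction ha with
  | zero => simpa using IsSumSq.zero
  | @sq_add x S pS ih =>
    have h : b * b * (x * x + S) = (b * x) * (b * x) + b * b * S := by ring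
    rw [h]
    exact IsSumSq.sq_add _ ih

theorem IsSumSq.mul' {a b : A} (ha : IsSumSq a) (hb : IsSumSq b) : IsSumSq (a * b) := by
  induction ha with
  | zero => simpa using IsSumSq.zero
  | @sq_add x S pS ih =>
    have h2 : (x * x + S) * b = x * x * b + S * b := by ring
    rw [h2]
    exact (isSumSq_mul_sq x hb).add ih

theorem isSumSq_sq (a : A) : IsSumSq (a ^ 2) := by
  simpa [sq] using IsSumSq.sq_add a 0 IsSumSq.zero

theorem isSumSq_sum {κ : Type*} (s : Finset κ) (f : κ → A)
    (h : ∀ a ∈ s, IsSumSq (f a)) : IsSumSq (∑ a ∈ s, f a) :=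
  Finset.sum_induction f IsSumSq (fun _ _ => IsSumSq.add) IsSumSq.zero h

end SOS

open MvPolynomial

theorem totalDegree_aeval_X_le {σ : Type} (i : σ) (p : ℝ[X]) :
    ((Polynomial.aeval (MvPolynomial.X i : MvPolynomial σ ℝ)) p).totalDegree ≤ p.natDegree := by
  rw [Polynomial.aeval_eq_sum_range]
  refine le_trans (totalDegree_finset_sum _ _) ?_
  refine Finset.sup_le fun k hk => ?_
  rw [MvPolynomial.smul_eq_C_mul]
  refine le_trans (totalDegree_mul _ _) ?_
  rw [totalDegree_C]
  refine le_trans ?_ (Nat.lt_succ_iff.mp (Finset.mem_range.mp hk))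
  simpa using (totalDegree_pow (MvPolynomial.X i : MvPolynomial σ ℝ) k).trans (by simp)

section Trunc

open scoped symmDiff

variable {σ ι : Type} [Fintype ι] [DecidableEq ι] {g : ι → MvPolynomial σ ℝ} {r r' : ℕ}
variable {p q : MvPolynomial σ ℝ}

theorem truncPre_single_mem (q : MvPolynomial σ ℝ) (I : Finset ι) (hq : IsSumSq q)
    (hd : (q * ∏ i ∈ I, g i).totalDegree ≤ r) : q * ∏ i ∈ I, g i ∈ truncPre g r := by
  refine ⟨fun J => if J = I then q else 0, fun J => ?_, fun J => ?_, ?_⟩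
  · show IsSumSq (if J = I then q else 0)
    rcases eq_or_ne J I with h | h
    · rw [if_pos h]; exact hq
    · rw [if_neg h]; exact IsSumSq.zero
  · show ((if J = I then q else 0) * ∏ i ∈ J, g i).totalDegree ≤ r
    rcases eq_or_ne J I with h | h
    · rw [if_pos h, h]; exact hd
    · rw [if_neg h, zero_mul]; simp
  · symm
    show (∑ J : Finset ι, (if J = I then q else 0) * ∏ i ∈ J, g i) = _
    simp only [ite_mul, zero_mul]
    rw [Finset.sum_ite_eq' Finset.univ I fun J => q * ∏ i ∈ J, g i]
    simp

theorem truncPre_add_mem (hp : p ∈ truncPre g r) (hq : q ∈ truncPre g r) :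
    p + q ∈ truncPre g r := by
  obtain ⟨s, hs1, hs2, rfl⟩ := hp
  obtain ⟨t, ht1, ht2, rfl⟩ := hq
  refine ⟨fun I => s I + t I, fun I => (hs1 I).add (ht1 I), fun I => ?_, ?_⟩
  · rw [add_mul]
    exact le_trans (totalDegree_add _ _) (max_le (hs2 I) (ht2 I))
  · rw [← Finset.sum_add_distrib]
    exact Finset.sum_congr rfl fun I _ => (add_mul _ _ _).symm

theorem truncPre_constmul_mem (c : ℝ) (hc : 0 ≤ c) (hp : p ∈ truncPre g r) :
    MvPolynomial.C c * p ∈ truncPre g r := by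
  obtain ⟨s, hs1, hs2, rfl⟩ := hp
  refine ⟨fun I => MvPolynomial.C c * s I, fun I => ?_, fun I => ?_, ?_⟩
  · have h : (MvPolynomial.C c : MvPolynomial σ ℝ) * s I
        = MvPolynomial.C (Real.sqrt c) * MvPolynomial.C (Real.sqrt c) * s I := by
      rw [← map_mul, Real.mul_self_sqrt hc]
    show IsSumSq (MvPolynomial.C c * s I)
    rw [h]
    exact isSumSq_mul_sq _ (hs1 I)
  · show (MvPolynomial.C c * s I * ∏ i ∈ I, g i).totalDegree ≤ r
    rw [mul_assoc]
    refine le_trans (totalDegree_mul _ _) ?_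
    rw [totalDegree_C]
    simpa using hs2 I
  · show _ = ∑ I : Finset ι, MvPolynomial.C c * s I * ∏ i ∈ I, g i
    rw [Finset.mul_sum]
    exact Finset.sum_congr rfl fun I _ => (mul_assoc _ _ _).symm

theorem prod_symmDiff_sq_inter (g : ι → MvPolynomial σ ℝ) (I J : Finset ι) :
    (∏ i ∈ I, g i) * (∏ i ∈ J, g i)
      = (∏ i ∈ I ∆ J, g i) * (∏ i ∈ I ∩ J, g i) ^ 2 := by
  have hdisj : Disjoint (I ∆ J) (I ∩ J) := disjoint_symmDiff_inf I J
  have hu : (I ∆ J) ∪ (I ∩ J) = I ∪ J := by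
    have := symmDiff_sup_inf I J
    simpa [Finset.sup_eq_union, Finset.inf_eq_inter] using this
  calc (∏ i ∈ I, g i) * (∏ i ∈ J, g i)
      = (∏ i ∈ I ∪ J, g i) * (∏ i ∈ I ∩ J, g i) := (Finset.prod_union_inter).symm
    _ = ((∏ i ∈ I ∆ J, g i) * (∏ i ∈ I ∩ J, g i)) * (∏ i ∈ I ∩ J, g i) := by
        rw [← hu, Finset.prod_union hdisj]
    _ = (∏ i ∈ I ∆ J, g i) * (∏ i ∈ I ∩ J, g i) ^ 2 := by ring

theorem truncPre_mul_mem (hp : p ∈ truncPre g r) (hq : q ∈ truncPre g r') :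
    p * q ∈ truncPre g (r + r') := by
  obtain ⟨s, hs1, hs2, rfl⟩ := hp
  obtain ⟨t, ht1, ht2, rfl⟩ := hq
  refine ⟨fun K => ∑ I : Finset ι, ∑ J : Finset ι,
      if I ∆ J = K then s I * t J * (∏ i ∈ I ∩ J, g i) ^ 2 else 0, fun K => ?_, fun K => ?_, ?_⟩
  · refine isSumSq_sum _ _ fun I _ => isSumSq_sum _ _ fun J _ => ?_
    split
    · have h : s I * t J * (∏ i ∈ I ∩ J, g i) ^ 2
          = (∏ i ∈ I ∩ J, g i) * (∏ i ∈ I ∩ J, g i) * (s I * t J) := by ring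
      rw [h]
      exact isSumSq_mul_sq _ ((hs1 I).mul' (ht1 J))
    · exact IsSumSq.zero
  · rw [Finset.sum_mul]
    refine le_trans (totalDegree_finset_sum _ _) (Finset.sup_le fun I _ => ?_)
    rw [Finset.sum_mul]
    refine le_trans (totalDegree_finset_sum _ _) (Finset.sup_le fun J _ => ?_)
    rcases eq_or_ne (I ∆ J) K with h | h
    · rw [if_pos h, ← h]
      have e : s I * t J * (∏ i ∈ I ∩ J, g i) ^ 2 * ∏ i ∈ I ∆ J, g i
          = (s I * ∏ i ∈ I, g i) * (t J * ∏ i ∈ J, g i) := by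
        linear_combination (-(s I * t J)) * prod_symmDiff_sq_inter g I J
      rw [e]
      exact le_trans (totalDegree_mul _ _) (add_le_add (hs2 I) (ht2 J))
    · rw [if_neg h, zero_mul]
      simp
  · rw [Finset.sum_mul_sum]
    symm
    calc (∑ K : Finset ι, (fun K => ∑ I : Finset ι, ∑ J : Finset ι,
          if I ∆ J = K then s I * t J * (∏ i ∈ I ∩ J, g i) ^ 2 else 0) K * ∏ i ∈ K, g i)
        = ∑ K : Finset ι, ∑ I : Finset ι, ∑ J : Finset ι,
            (if I ∆ J = K then s I * t J * (∏ i ∈ I ∩ J, g i) ^ 2 else 0) * ∏ i ∈ K, g i := by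
          refine Finset.sum_congr rfl fun K _ => ?_
          show (∑ I : Finset ι, ∑ J : Finset ι, _) * _ = _
          rw [Finset.sum_mul]
          exact Finset.sum_congr rfl fun I _ => Finset.sum_mul _ _ _
      _ = ∑ I : Finset ι, ∑ K : Finset ι, ∑ J : Finset ι,
            (if I ∆ J = K then s I * t J * (∏ i ∈ I ∩ J, g i) ^ 2 else 0) * ∏ i ∈ K, g i :=
          Finset.sum_comm
      _ = ∑ I : Finset ι, ∑ J : Finset ι, ∑ K : Finset ι,
            (if I ∆ J = K then s I * t J * (∏ i ∈ I ∩ J, g i) ^ 2 else 0) * ∏ i ∈ K, g i :=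
          Finset.sum_congr rfl fun I _ => Finset.sum_comm
      _ = ∑ I : Finset ι, ∑ J : Finset ι, (s I * ∏ i ∈ I, g i) * (t J * ∏ i ∈ J, g i) := by
          refine Finset.sum_congr rfl fun I _ => Finset.sum_congr rfl fun J _ => ?_
          simp only [ite_mul, zero_mul]
          rw [Finset.sum_ite_eq Finset.univ (I ∆ J)
            fun K => s I * t J * (∏ i ∈ I ∩ J, g i) ^ 2 * ∏ i ∈ K, g i]
          rw [if_pos (Finset.mem_univ _)]
          linear_combination (-(s I * t J)) * prod_symmDiff_sq_inter g I J

end Trunc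


theorem isSumSq_two {A : Type*} [CommRing A] : IsSumSq (2 : A) := by
  have h : (2 : A) = 1 * 1 + (1 * 1 + 0) := by ring
  rw [h]
  exact IsSumSq.sq_add _ (IsSumSq.sq_add _ IsSumSq.zero)

theorem isSumSq_two_mul_sq {A : Type*} [CommRing A] (p : A) : IsSumSq (2 * p ^ 2) := by
  have h : 2 * p ^ 2 = p * p + (p * p + 0) := by ring
  rw [h]
  exact IsSumSq.sq_add _ (IsSumSq.sq_add _ IsSumSq.zero)

theorem totalDegree_two {σ : Type} : (2 : MvPolynomial σ ℝ).totalDegree = 0 := by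
  rw [← map_ofNat (MvPolynomial.C (σ := σ) (R := ℝ)) 2]
  exact totalDegree_C _

section Uni

variable {σ : Type} [Fintype σ] [DecidableEq σ]

theorem uni (i : σ) (k : ℕ) :
    1 + Polynomial.aeval (MvPolynomial.X i : MvPolynomial σ ℝ) (T ℝ k) ∈ truncPre (pmGen (σ := σ)) k ∧
    1 - Polynomial.aeval (MvPolynomial.X i : MvPolynomial σ ℝ) (T ℝ k) ∈ truncPre (pmGen (σ := σ)) k := by
  induction k using Nat.strong_induction_on with
  | _ k ih =>
  rcases Nat.even_or_odd k with hk | hk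
  · obtain ⟨m, hm⟩ := hk
    rcases Nat.eq_zero_or_pos m with rfl | hmpos
    · have hk0 : k = 0 := by omega
      subst hk0
      have h0 : Polynomial.aeval (MvPolynomial.X i : MvPolynomial σ ℝ) (T ℝ (0 : ℕ)) = 1 := by
        norm_num [Polynomial.Chebyshev.T_zero]
      constructor
      · have e : (1 : MvPolynomial σ ℝ) + Polynomial.aeval (MvPolynomial.X i : MvPolynomial σ ℝ) (T ℝ (0:ℕ))
            = 2 * ∏ v ∈ (∅ : Finset (σ × Bool)), pmGen v := by
          rw [h0]; norm_num
        rw [e]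
        exact truncPre_single_mem _ _ isSumSq_two
          (by simpa [totalDegree_two] using le_refl 0)
      · have e : (1 : MvPolynomial σ ℝ) - Polynomial.aeval (MvPolynomial.X i : MvPolynomial σ ℝ) (T ℝ (0:ℕ))
            = 0 * ∏ v ∈ (∅ : Finset (σ × Bool)), pmGen v := by
          rw [h0]; norm_num
        rw [e]
        exact truncPre_single_mem _ _ IsSumSq.zero (by simp)
    · have hcast : ((k : ℕ) : ℤ) = 2 * (m : ℤ) := by rw [hm]; push_cast; ring
      obtain ⟨ih1, ih2⟩ := ih m (by omega)
      have hdegT : (Polynomial.aeval (MvPolynomial.X i : MvPolynomial σ ℝ) (T ℝ m)).totalDegree ≤ m :=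
        le_trans (totalDegree_aeval_X_le i _) (natDegree_T_le m)
      constructor
      · have h := congrArg (Polynomial.aeval (MvPolynomial.X i : MvPolynomial σ ℝ)) (cheb_even_add (m : ℤ))
        simp only [map_add, map_mul, map_one, map_pow, map_ofNat] at h
        have e : (1 : MvPolynomial σ ℝ) + Polynomial.aeval (MvPolynomial.X i : MvPolynomial σ ℝ) (T ℝ k)
            = (2 * (Polynomial.aeval (MvPolynomial.X i : MvPolynomial σ ℝ) (T ℝ m)) ^ 2)
              * ∏ v ∈ (∅ : Finset (σ × Bool)), pmGen v := by
          rw [hcast, h]; rw [Finset.prod_empty, mul_one]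
        rw [e]
        refine truncPre_single_mem _ _ (isSumSq_two_mul_sq _) ?_
        rw [Finset.prod_empty, mul_one]
        refine le_trans (totalDegree_mul _ _) ?_
        have h1 := (totalDegree_pow (Polynomial.aeval (MvPolynomial.X i : MvPolynomial σ ℝ) (T ℝ m)) 2)
        rw [totalDegree_two]
        omega
      · have h := congrArg (Polynomial.aeval (MvPolynomial.X i : MvPolynomial σ ℝ)) (cheb_even_sub (m : ℤ))
        simp only [map_add, map_mul, map_sub, map_one, map_pow, map_ofNat] at h
        have e : (1 : MvPolynomial σ ℝ) - Polynomial.aeval (MvPolynomial.X i : MvPolynomial σ ℝ) (T ℝ k)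
            = MvPolynomial.C 2 * ((1 - Polynomial.aeval (MvPolynomial.X i : MvPolynomial σ ℝ) (T ℝ m))
              * (1 + Polynomial.aeval (MvPolynomial.X i : MvPolynomial σ ℝ) (T ℝ m))) := by
          rw [hcast, h, map_ofNat (MvPolynomial.C (σ := σ) (R := ℝ)) 2]
        rw [e, hm]
        exact truncPre_constmul_mem 2 (by norm_num) (truncPre_mul_mem ih2 ih1)
  · obtain ⟨m, hm⟩ := hk
    have hcast : ((k : ℕ) : ℤ) = 2 * (m : ℤ) + 1 := by rw [hm]; push_cast; ring
    have hX : (MvPolynomial.X i : MvPolynomial σ ℝ).totalDegree ≤ 1 := le_of_eq (totalDegree_X i)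
    have hneg : (-(MvPolynomial.X i) : MvPolynomial σ ℝ).totalDegree ≤ 1 := by
      have h : (-(MvPolynomial.X i) : MvPolynomial σ ℝ) = MvPolynomial.C (-1) * MvPolynomial.X i := by
        rw [map_neg, map_one]; ring
      rw [h]
      refine le_trans (totalDegree_mul _ _) ?_
      rw [totalDegree_C]
      simpa using hX
    have hdeg1 : ∀ b : Bool, (pmGen (σ := σ) (i, b)).totalDegree ≤ 1 := by
      intro b
      cases b
      · have h : pmGen (σ := σ) (i, false) = 1 + (-(MvPolynomial.X i)) := by
          show (1 : MvPolynomial σ ℝ) - MvPolynomial.X i = 1 + (-(MvPolynomial.X i)); ring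
        rw [h]
        exact le_trans (totalDegree_add _ _) (max_le (by simp) hneg)
      · have h : pmGen (σ := σ) (i, true) = 1 + MvPolynomial.X i := rfl
        rw [h]
        exact le_trans (totalDegree_add _ _) (max_le (by simp) hX)
    constructor
    · have h := congrArg (Polynomial.aeval (MvPolynomial.X i : MvPolynomial σ ℝ)) (cheb_odd_add (m : ℤ))
      simp only [map_add, map_mul, map_sub, map_one, map_pow, Polynomial.aeval_X] at h
      have e : (1 : MvPolynomial σ ℝ) + Polynomial.aeval (MvPolynomial.X i : MvPolynomial σ ℝ) (T ℝ k)
          = (Polynomial.aeval (MvPolynomial.X i : MvPolynomial σ ℝ) (U ℝ m)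
              - Polynomial.aeval (MvPolynomial.X i : MvPolynomial σ ℝ) (U ℝ ((m : ℤ) - 1))) ^ 2
            * ∏ v ∈ ({(i, true)} : Finset (σ × Bool)), pmGen v := by
        rw [hcast, h, Finset.prod_singleton]
        have hg : pmGen (σ := σ) (i, true) = 1 + MvPolynomial.X i := rfl
        rw [hg]; ring
      rw [e]
      refine truncPre_single_mem _ _ (isSumSq_sq _) ?_
      rw [Finset.prod_singleton]
      refine le_trans (totalDegree_mul _ _) ?_
      have h1 := totalDegree_pow (Polynomial.aeval (MvPolynomial.X i : MvPolynomial σ ℝ) (U ℝ m)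
          - Polynomial.aeval (MvPolynomial.X i : MvPolynomial σ ℝ) (U ℝ ((m : ℤ) - 1))) 2
      have h2 : (Polynomial.aeval (MvPolynomial.X i : MvPolynomial σ ℝ) (U ℝ m)
          - Polynomial.aeval (MvPolynomial.X i : MvPolynomial σ ℝ) (U ℝ ((m : ℤ) - 1))).totalDegree ≤ m := by
        rw [← map_sub]
        refine le_trans (totalDegree_aeval_X_le i _) ?_
        refine le_trans (Polynomial.natDegree_sub_le _ _) ?_
        exact max_le (natDegree_U_le m) (natDegree_U_le' m)
      have h3 := hdeg1 true
      omega
    · have h := congrArg (Polynomial.aeval (MvPolynomial.X i : MvPolynomial σ ℝ)) (cheb_odd_sub (m : ℤ))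
      simp only [map_add, map_mul, map_sub, map_one, map_pow, Polynomial.aeval_X] at h
      have e : (1 : MvPolynomial σ ℝ) - Polynomial.aeval (MvPolynomial.X i : MvPolynomial σ ℝ) (T ℝ k)
          = (Polynomial.aeval (MvPolynomial.X i : MvPolynomial σ ℝ) (U ℝ m)
              + Polynomial.aeval (MvPolynomial.X i : MvPolynomial σ ℝ) (U ℝ ((m : ℤ) - 1))) ^ 2
            * ∏ v ∈ ({(i, false)} : Finset (σ × Bool)), pmGen v := by
        rw [hcast, h, Finset.prod_singleton]
        have hg : pmGen (σ := σ) (i, false) = 1 - MvPolynomial.X i := rfl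
        rw [hg]; ring
      rw [e]
      refine truncPre_single_mem _ _ (isSumSq_sq _) ?_
      rw [Finset.prod_singleton]
      refine le_trans (totalDegree_mul _ _) ?_
      have h1 := totalDegree_pow (Polynomial.aeval (MvPolynomial.X i : MvPolynomial σ ℝ) (U ℝ m)
          + Polynomial.aeval (MvPolynomial.X i : MvPolynomial σ ℝ) (U ℝ ((m : ℤ) - 1))) 2
      have h2 : (Polynomial.aeval (MvPolynomial.X i : MvPolynomial σ ℝ) (U ℝ m)
          + Polynomial.aeval (MvPolynomial.X i : MvPolynomial σ ℝ) (U ℝ ((m : ℤ) - 1))).totalDegree ≤ m := by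
        rw [← map_add]
        refine le_trans (totalDegree_aeval_X_le i _) ?_
        refine le_trans (Polynomial.natDegree_add_le _ _) ?_
        exact max_le (natDegree_U_le m) (natDegree_U_le' m)
      have h3 := hdeg1 false
      omega

end Uni

theorem C_half_two {σ : Type} :
    (MvPolynomial.C ((1:ℝ)/2) : MvPolynomial σ ℝ) * 2 = 1 := by
  rw [← map_ofNat (MvPolynomial.C (σ := σ) (R := ℝ)) 2, ← map_mul]
  norm_num

/-- For every multi-index `α`, both `1 + T_α` and `1 − T_α` lie in the truncated
pre-ordering `𝒯(1±x_1,...,1±x_n)_{|α|}`. -/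
theorem one_add_chebT_mem_truncPre (n : ℕ) (α : Fin n → ℕ) :
    1 + chebT α ∈ truncPre (pmGen (σ := Fin n)) (∑ i, α i) ∧
    1 - chebT α ∈ truncPre (pmGen (σ := Fin n)) (∑ i, α i) := by
  have main : ∀ s : Finset (Fin n),
      (1 + ∏ i ∈ s, Polynomial.aeval (MvPolynomial.X i : MvPolynomial (Fin n) ℝ) (T ℝ (α i))
        ∈ truncPre (pmGen (σ := Fin n)) (∑ i ∈ s, α i)) ∧
      (1 - ∏ i ∈ s, Polynomial.aeval (MvPolynomial.X i : MvPolynomial (Fin n) ℝ) (T ℝ (α i))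
        ∈ truncPre (pmGen (σ := Fin n)) (∑ i ∈ s, α i)) := by
    intro s
    induction s using Finset.cons_induction with
    | empty =>
      constructor
      · rw [Finset.prod_empty, Finset.sum_empty]
        have e : (1 : MvPolynomial (Fin n) ℝ) + 1
            = 2 * ∏ v ∈ (∅ : Finset (Fin n × Bool)), pmGen v := by norm_num
        rw [e]
        exact truncPre_single_mem _ _ isSumSq_two
          (by simpa [totalDegree_two] using le_refl 0)
      · rw [Finset.prod_empty, Finset.sum_empty]
        have e : (1 : MvPolynomial (Fin n) ℝ) - 1
            = 0 * ∏ v ∈ (∅ : Finset (Fin n × Bool)), pmGen v := by norm_num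
        rw [e]
        exact truncPre_single_mem _ _ IsSumSq.zero (by simp)
    | cons a s ha ih =>
      rw [Finset.prod_cons, Finset.sum_cons]
      obtain ⟨ih1, ih2⟩ := ih
      obtain ⟨hv1, hv2⟩ := uni a (α a)
      set v : MvPolynomial (Fin n) ℝ := Polynomial.aeval (MvPolynomial.X a) (T ℝ (α a)) with hv
      set u : MvPolynomial (Fin n) ℝ :=
        ∏ i ∈ s, Polynomial.aeval (MvPolynomial.X i : MvPolynomial (Fin n) ℝ) (T ℝ (α i)) with hu
      constructor
      · have e : (1 : MvPolynomial (Fin n) ℝ) + v * u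
            = MvPolynomial.C ((1:ℝ)/2) * ((1 + v) * (1 + u) + (1 - v) * (1 - u)) := by
          calc (1 : MvPolynomial (Fin n) ℝ) + v * u
              = (MvPolynomial.C ((1:ℝ)/2) * 2) * (1 + v * u) := by rw [C_half_two, one_mul]
            _ = MvPolynomial.C ((1:ℝ)/2) * ((1 + v) * (1 + u) + (1 - v) * (1 - u)) := by ring
        rw [e]
        exact truncPre_constmul_mem _ (by norm_num)
          (truncPre_add_mem (truncPre_mul_mem hv1 ih1) (truncPre_mul_mem hv2 ih2))
      · have e : (1 : MvPolynomial (Fin n) ℝ) - v * u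
            = MvPolynomial.C ((1:ℝ)/2) * ((1 + v) * (1 - u) + (1 - v) * (1 + u)) := by
          calc (1 : MvPolynomial (Fin n) ℝ) - v * u
              = (MvPolynomial.C ((1:ℝ)/2) * 2) * (1 - v * u) := by rw [C_half_two, one_mul]
            _ = MvPolynomial.C ((1:ℝ)/2) * ((1 + v) * (1 - u) + (1 - v) * (1 + u)) := by ring
        rw [e]
        exact truncPre_constmul_mem _ (by norm_num)
          (truncPre_add_mem (truncPre_mul_mem hv1 ih2) (truncPre_mul_mem hv2 ih1))
  have h := main Finset.univ
  simpa [chebT] using h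
end

section
/- Let f ∈ ℝ[x_1,...,x_n] be nonnegative on [−1,1]^n and let ε > 0. If r ∈ ℕ is such that the polynomial f(x) + ε(1 + Σ_{i=1}^n x_i^{2r}) is a sum of squares of polynomials of degree at most 2r, then f + (n+1)ε belongs to the truncated pre-ordering 𝒯(1±x_1,...,1±x_n)_{2r}. -/
open MvPolynomial

/-!
The certificate is explicit. Since `1 - x^{2r} = (1 + x)(1 - x) ∑_{k<r} x^{2k}`, each
`ε (1 - x_i^{2r})` is a sum of squares times the generator product `(1 + x_i)(1 - x_i)`,
of degree `2r`. Adding these `n` terms to the sum of squares `f + ε(1 + ∑ x_i^{2r})` yields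
`f + (n + 1)ε`.
-/

theorem sum_range_pow_sq_mul_one_add_mul_one_sub {R : Type*} [CommRing R] (x : R) (r : ℕ) :
    (∑ k ∈ Finset.range r, (x ^ k) ^ 2) * ((1 + x) * (1 - x)) = 1 - x ^ (2 * r) := by
  simp_rw [← pow_mul, mul_comm _ 2, pow_mul]
  linear_combination -geom_sum_mul (x ^ 2) r

section truncPre

variable {σ ι : Type} [Fintype ι] [DecidableEq ι] (g : ι → MvPolynomial σ ℝ) (r : ℕ)

theorem add_mem_truncPre {p q : MvPolynomial σ ℝ} (hp : p ∈ truncPre g r)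
    (hq : q ∈ truncPre g r) : p + q ∈ truncPre g r := by
  obtain ⟨s, hs, hs_deg, rfl⟩ := hp
  obtain ⟨t, ht, ht_deg, rfl⟩ := hq
  refine ⟨s + t, fun I => (hs I).add (ht I), fun I => ?_, ?_⟩
  · rw [Pi.add_apply, add_mul]
    exact (totalDegree_add _ _).trans (max_le (hs_deg I) (ht_deg I))
  · simp only [Pi.add_apply, add_mul, Finset.sum_add_distrib]

theorem sum_mem_truncPre {κ : Type*} (J : Finset κ) {p : κ → MvPolynomial σ ℝ}
    (hp : ∀ k ∈ J, p k ∈ truncPre g r) : ∑ k ∈ J, p k ∈ truncPre g r :=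
  Finset.sum_induction p (· ∈ truncPre g r) (fun _ _ => add_mem_truncPre g r)
    ⟨0, fun _ => IsSumSq.zero, fun _ => by simp, by simp⟩ hp

theorem mul_prod_mem_truncPre {s : MvPolynomial σ ℝ} (hs : IsSumSq s) {I : Finset ι}
    (hdeg : (s * ∏ i ∈ I, g i).totalDegree ≤ r) : s * ∏ i ∈ I, g i ∈ truncPre g r := by
  refine ⟨Pi.single I s, fun J => ?_, fun J => ?_, ?_⟩
  · obtain rfl | hJ := eq_or_ne J I
    · simpa using hs
    · simp [hJ]
  · obtain rfl | hJ := eq_or_ne J I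
    · simpa using hdeg
    · simp [hJ]
  · simp [Pi.single_apply, ite_mul]

theorem mem_truncPre_of_isSumSq {s : MvPolynomial σ ℝ} (hs : IsSumSq s)
    (hdeg : s.totalDegree ≤ r) : s ∈ truncPre g r := by
  simpa using mul_prod_mem_truncPre g r hs (I := ∅) (by simpa using hdeg)

end truncPre

section pmGen

variable {σ : Type} [DecidableEq σ]

theorem prod_pmGen_pair (i : σ) :
    ∏ v ∈ {(i, true), (i, false)}, pmGen v = (1 + X i) * (1 - X i) := by
  rw [Finset.prod_pair (by simp)]
  simp [pmGen]

theorem C_mul_one_sub_X_pow_mem_truncPre [Fintype σ] {c : ℝ} (hc : 0 ≤ c) (i : σ) (r : ℕ) :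
    C c * (1 - X i ^ (2 * r)) ∈ truncPre (pmGen (σ := σ)) (2 * r) := by
  have hsq : IsSumSq (C c : MvPolynomial σ ℝ) :=
    IsSquare.isSumSq ⟨C √c, by rw [← C_mul, Real.mul_self_sqrt hc]⟩
  have hfactor : C c * (1 - X i ^ (2 * r)) =
      (C c * ∑ k ∈ Finset.range r, (X i ^ k) ^ 2) * ∏ v ∈ {(i, true), (i, false)}, pmGen v := by
    rw [prod_pmGen_pair, mul_assoc, sum_range_pow_sq_mul_one_add_mul_one_sub]
  rw [hfactor]
  refine mul_prod_mem_truncPre _ _ (hsq.mul (IsSumSq.sum_sq _ _)) ?_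
  rw [← hfactor]
  refine (totalDegree_mul _ _).trans ?_
  rw [totalDegree_C, zero_add]
  refine (totalDegree_sub _ _).trans (max_le ?_ ?_)
  · simp
  · exact (totalDegree_X_pow _ _).le

theorem perturbed_sos_implies_truncPre_general (n r : ℕ) (f : MvPolynomial (Fin n) ℝ)
    (ε : ℝ) (hε : 0 < ε)
    (hsos : IsSumSq (f + MvPolynomial.C ε *
        (1 + ∑ i : Fin n, MvPolynomial.X i ^ (2 * r))))
    (hdeg : (f + MvPolynomial.C ε *
        (1 + ∑ i : Fin n, MvPolynomial.X i ^ (2 * r))).totalDegree ≤ 2 * r) :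
    f + MvPolynomial.C ((n + 1) * ε) ∈ truncPre (pmGen (σ := Fin n)) (2 * r) := by
  have hsplit : f + C ((n + 1) * ε) = (f + C ε * (1 + ∑ i : Fin n, X i ^ (2 * r))) +
      ∑ i : Fin n, C ε * (1 - X i ^ (2 * r)) := by
    simp only [← Finset.mul_sum, Finset.sum_sub_distrib, Finset.sum_const, Finset.card_univ,
      Fintype.card_fin, nsmul_eq_mul, map_mul, map_add, map_natCast, map_one]
    ring
  rw [hsplit]
  exact add_mem_truncPre _ _ (mem_truncPre_of_isSumSq _ _ hsos hdeg)
    (sum_mem_truncPre _ _ _ fun i _ => C_mul_one_sub_X_pow_mem_truncPre hε.le i r)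

/-- If `f` is nonnegative on `[−1,1]^n`, `ε > 0`, and
`f + ε(1 + ∑_i x_i^{2r})` is a sum of squares of polynomials of degree at most `2r`,
then `f + (n+1)ε ∈ 𝒯(1±x_1,...,1±x_n)_{2r}`. -/
theorem perturbed_sos_implies_truncPre (n r : ℕ) (f : MvPolynomial (Fin n) ℝ)
    (hf : ∀ x : Fin n → ℝ, (∀ i, |x i| ≤ 1) → 0 ≤ eval x f)
    (ε : ℝ) (hε : 0 < ε)
    (hsos : IsSumSq (f + MvPolynomial.C ε *
        (1 + ∑ i : Fin n, MvPolynomial.X i ^ (2 * r))))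
    (hdeg : (f + MvPolynomial.C ε *
        (1 + ∑ i : Fin n, MvPolynomial.X i ^ (2 * r))).totalDegree ≤ 2 * r) :
    f + MvPolynomial.C ((n + 1) * ε) ∈ truncPre (pmGen (σ := Fin n)) (2 * r) :=
  perturbed_sos_implies_truncPre_general n r f ε hε hsos hdeg
end pmGen
end

section
/- Let K be a polynomial in the variables (x_1,...,x_n,y_1,...,y_n) belonging to the bidegree-truncated pre-ordering 𝒯(1±x_1,...,1±x_n; 1±y_1,...,1±y_n)_{r,r}. Then for every f ∈ ℝ[x_1,...,x_n] of degree at most d that is nonnegative on [−1,1]^n, the polynomial x ↦ ∫_{[−1,1]^n} f(y) K(x,y) dμ(y) belongs to 𝒯(1±x_1,...,1±x_n)_r. -/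
open MvPolynomial MeasureTheory

/-- Degree of a polynomial in the variables `(x,y)` with respect to the `x`-variables. -/
def degX {n : ℕ} (p : MvPolynomial (Fin n ⊕ Fin n) ℝ) : ℕ :=
  p.support.sup fun m => ∑ i : Fin n, m (Sum.inl i)

/-- Degree of a polynomial in the variables `(x,y)` with respect to the `y`-variables. -/
def degY {n : ℕ} (p : MvPolynomial (Fin n ⊕ Fin n) ℝ) : ℕ :=
  p.support.sup fun m => ∑ i : Fin n, m (Sum.inr i)

/-- The bidegree-truncated pre-ordering `𝒯(1±x_1,...,1±x_n; 1±y_1,...,1±y_n)_{r₁,r₂}`: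
sums of terms `σ_J ∏_{v ∈ J} (1 ± x_i resp. 1 ± y_i)` with each `σ_J` a sum of squares,
each term of degree at most `r₁` in the `x`-variables and at most `r₂` in the
`y`-variables. -/
noncomputable def biPre (n : ℕ) (r₁ r₂ : ℕ) : Set (MvPolynomial (Fin n ⊕ Fin n) ℝ) :=
  {p | ∃ s : Finset ((Fin n ⊕ Fin n) × Bool) → MvPolynomial (Fin n ⊕ Fin n) ℝ,
    (∀ J, IsSumSq (s J)) ∧
    (∀ J : Finset ((Fin n ⊕ Fin n) × Bool),
      degX (s J * ∏ v ∈ J, pmGen v) ≤ r₁ ∧ degY (s J * ∏ v ∈ J, pmGen v) ≤ r₂) ∧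
    p = ∑ J : Finset ((Fin n ⊕ Fin n) × Bool), s J * ∏ v ∈ J, pmGen v}

/-- The univariate Chebyshev measure `(π √(1−x²))⁻¹ dx` on `[−1,1]`. -/
noncomputable def chebMeasure1 : Measure ℝ :=
  (volume.restrict (Set.Icc (-1 : ℝ) 1)).withDensity
    fun x => ENNReal.ofReal (1 / (Real.pi * Real.sqrt (1 - x ^ 2)))

/-- The product Chebyshev measure on `[−1,1]^n`. -/
noncomputable def chebMeasure (n : ℕ) : Measure (Fin n → ℝ) :=
  Measure.pi fun _ => chebMeasure1

namespace ChebAux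


variable {n : ℕ}

noncomputable def xpart (m : (Fin n ⊕ Fin n) →₀ ℕ) : Fin n →₀ ℕ :=
  Finsupp.comapDomain Sum.inl m Sum.inl_injective.injOn

noncomputable def ypart (m : (Fin n ⊕ Fin n) →₀ ℕ) : Fin n →₀ ℕ :=
  Finsupp.comapDomain Sum.inr m Sum.inr_injective.injOn

@[simp] lemma xpart_apply (m : (Fin n ⊕ Fin n) →₀ ℕ) (i : Fin n) :
    xpart m i = m (Sum.inl i) := rfl

@[simp] lemma ypart_apply (m : (Fin n ⊕ Fin n) →₀ ℕ) (i : Fin n) :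
    ypart m i = m (Sum.inr i) := rfl

lemma xpart_add (m₁ m₂ : (Fin n ⊕ Fin n) →₀ ℕ) :
    xpart (m₁ + m₂) = xpart m₁ + xpart m₂ := by ext i; simp

lemma ypart_add (m₁ m₂ : (Fin n ⊕ Fin n) →₀ ℕ) :
    ypart (m₁ + m₂) = ypart m₁ + ypart m₂ := by ext i; simp

@[simp] lemma xpart_mapDomain_inl (a : Fin n →₀ ℕ) :
    xpart (Finsupp.mapDomain Sum.inl a) = a := by
  ext i; simp [Finsupp.mapDomain_apply Sum.inl_injective]

@[simp] lemma ypart_mapDomain_inr (b : Fin n →₀ ℕ) :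
    ypart (Finsupp.mapDomain Sum.inr b) = b := by
  ext i; simp [Finsupp.mapDomain_apply Sum.inr_injective]

@[simp] lemma xpart_mapDomain_inr (b : Fin n →₀ ℕ) :
    xpart (Finsupp.mapDomain Sum.inr b) = 0 := by
  ext i
  simp only [xpart_apply, Finsupp.coe_zero, Pi.zero_apply]
  exact Finsupp.mapDomain_notin_range _ _ (by simp)

@[simp] lemma ypart_mapDomain_inl (a : Fin n →₀ ℕ) :
    ypart (Finsupp.mapDomain Sum.inl a) = 0 := by
  ext i
  simp only [ypart_apply, Finsupp.coe_zero, Pi.zero_apply]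
  exact Finsupp.mapDomain_notin_range _ _ (by simp)

lemma m_decomp (m : (Fin n ⊕ Fin n) →₀ ℕ) :
    m = Finsupp.mapDomain Sum.inl (xpart m) + Finsupp.mapDomain Sum.inr (ypart m) := by
  ext v
  cases v with
  | inl i =>
    rw [Finsupp.add_apply, Finsupp.mapDomain_apply Sum.inl_injective,
      Finsupp.mapDomain_notin_range (ypart m) (Sum.inl i) (by simp)]
    simp
  | inr i =>
    rw [Finsupp.add_apply, Finsupp.mapDomain_apply Sum.inr_injective,
      Finsupp.mapDomain_notin_range (xpart m) (Sum.inr i) (by simp)]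
    simp

/-- "Integrate out the `y` variables" coefficient-wise, using the functional `Λ`. -/
noncomputable def intY (Λ : MvPolynomial (Fin n) ℝ → ℝ)
    (p : MvPolynomial (Fin n ⊕ Fin n) ℝ) : MvPolynomial (Fin n) ℝ :=
  (AddMonoidAlgebra.coeff p).sum fun m c => (c * Λ (monomial (ypart m) 1)) • monomial (xpart m) (1 : ℝ)

@[simp] lemma intY_zero (Λ : MvPolynomial (Fin n) ℝ → ℝ) : intY Λ 0 = 0 := by
  simp [intY]

@[simp] lemma intY_monomial (Λ : MvPolynomial (Fin n) ℝ → ℝ)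
    (m : (Fin n ⊕ Fin n) →₀ ℕ) (c : ℝ) :
    intY Λ (monomial m c) = (c * Λ (monomial (ypart m) 1)) • monomial (xpart m) (1 : ℝ) := by
  classical
  rw [intY, sum_monomial_eq]
  simp

lemma intY_add (Λ : MvPolynomial (Fin n) ℝ → ℝ) (p q : MvPolynomial (Fin n ⊕ Fin n) ℝ) :
    intY Λ (p + q) = intY Λ p + intY Λ q := by
  classical
  rw [intY, intY, intY, AddMonoidAlgebra.coeff_add]
  exact Finsupp.sum_add_index (by simp) (by intros; simp [add_mul, add_smul])

lemma intY_finsetSum (Λ : MvPolynomial (Fin n) ℝ → ℝ) {ι : Type*} (s : Finset ι)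
    (g : ι → MvPolynomial (Fin n ⊕ Fin n) ℝ) :
    intY Λ (∑ i ∈ s, g i) = ∑ i ∈ s, intY Λ (g i) := by
  classical
  induction s using Finset.cons_induction with
  | empty => simp
  | cons i s his ih => rw [Finset.sum_cons, Finset.sum_cons, intY_add, ih]

lemma lam_finsetSum {Λ : MvPolynomial (Fin n) ℝ → ℝ}
    (hadd : ∀ q q', Λ (q + q') = Λ q + Λ q') (hzero : Λ 0 = 0)
    {ι : Type*} (s : Finset ι) (g : ι → MvPolynomial (Fin n) ℝ) :
    Λ (∑ i ∈ s, g i) = ∑ i ∈ s, Λ (g i) := by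
  classical
  induction s using Finset.cons_induction with
  | empty => simpa
  | cons i s his ih => rw [Finset.sum_cons, Finset.sum_cons, hadd, ih]

lemma lam_zero {Λ : MvPolynomial (Fin n) ℝ → ℝ}
    (hsmul : ∀ (c : ℝ) q, Λ (c • q) = c * Λ q) : Λ 0 = 0 := by
  have := hsmul 0 0
  simpa using this

lemma intY_rename_inl_mul (Λ : MvPolynomial (Fin n) ℝ → ℝ) (P : MvPolynomial (Fin n) ℝ)
    (p : MvPolynomial (Fin n ⊕ Fin n) ℝ) :
    intY Λ (rename Sum.inl P * p) = P * intY Λ p := by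
  have key : ∀ (a : Fin n →₀ ℕ) (cP : ℝ) (m : (Fin n ⊕ Fin n) →₀ ℕ) (cp : ℝ),
      intY Λ (rename Sum.inl (monomial a cP) * monomial m cp)
        = monomial a cP * intY Λ (monomial m cp) := by
    intro a cP m cp
    rw [rename_monomial, monomial_mul, intY_monomial, intY_monomial,
      ypart_add, ypart_mapDomain_inl, zero_add, xpart_add, xpart_mapDomain_inl,
      mul_smul_comm, monomial_mul, smul_monomial, smul_monomial]
    congr 1
    simp only [smul_eq_mul]
    ring
  conv_lhs => rw [as_sum P]
  conv_rhs => rw [as_sum P]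
  rw [map_sum, Finset.sum_mul, intY_finsetSum, Finset.sum_mul]
  refine Finset.sum_congr rfl fun a _ => ?_
  conv_lhs => rw [as_sum p]
  conv_rhs => rw [as_sum p]
  rw [Finset.mul_sum, intY_finsetSum, intY_finsetSum, Finset.mul_sum]
  exact Finset.sum_congr rfl fun m _ => key a (coeff a P) m (coeff m p)

lemma intY_mul_rename_inr (Λ : MvPolynomial (Fin n) ℝ → ℝ)
    (hadd : ∀ q q', Λ (q + q') = Λ q + Λ q') (hsmul : ∀ (c : ℝ) q, Λ (c • q) = c * Λ q)
    (p : MvPolynomial (Fin n ⊕ Fin n) ℝ) (Q : MvPolynomial (Fin n) ℝ) :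
    intY Λ (p * rename Sum.inr Q) = intY (fun q => Λ (Q * q)) p := by
  conv_lhs => rw [as_sum p]
  conv_rhs => rw [as_sum p]
  rw [Finset.sum_mul, intY_finsetSum, intY_finsetSum]
  refine Finset.sum_congr rfl fun m _ => ?_
  -- monomial case
  rw [intY_monomial]
  conv_lhs => rw [as_sum Q]
  rw [map_sum, Finset.mul_sum, intY_finsetSum]
  have hQ : Q * monomial (ypart m) (1:ℝ)
      = ∑ b ∈ Q.support, monomial (b + ypart m) (coeff b Q) := by
    conv_lhs => rw [as_sum Q]
    rw [Finset.sum_mul]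
    exact Finset.sum_congr rfl fun b _ => by rw [monomial_mul, mul_one]
  rw [hQ, lam_finsetSum hadd (lam_zero hsmul), Finset.mul_sum, Finset.sum_smul]
  refine Finset.sum_congr rfl fun b _ => ?_
  rw [rename_monomial, monomial_mul, intY_monomial, ypart_add, ypart_mapDomain_inr,
    xpart_add, xpart_mapDomain_inr, add_zero]
  have h2 : monomial (b + ypart m) (coeff b Q) = coeff b Q • monomial (b + ypart m) (1:ℝ) := by
    rw [smul_monomial, smul_eq_mul, mul_one]
  rw [h2, hsmul, add_comm b (ypart m)]
  rw [mul_assoc]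

lemma intY_rename_inr (Λ : MvPolynomial (Fin n) ℝ → ℝ)
    (hadd : ∀ q q', Λ (q + q') = Λ q + Λ q') (hsmul : ∀ (c : ℝ) q, Λ (c • q) = c * Λ q)
    (q : MvPolynomial (Fin n) ℝ) :
    intY Λ (rename Sum.inr q) = Λ q • 1 := by
  conv_lhs => rw [as_sum q]
  conv_rhs => rw [as_sum q]
  rw [map_sum, intY_finsetSum, lam_finsetSum hadd (lam_zero hsmul), Finset.sum_smul]
  refine Finset.sum_congr rfl fun b _ => ?_
  rw [rename_monomial, intY_monomial, ypart_mapDomain_inr, xpart_mapDomain_inr]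
  have h2 : monomial b (coeff b q) = coeff b q • monomial b (1:ℝ) := by
    rw [smul_monomial, smul_eq_mul, mul_one]
  rw [h2, hsmul]
  simp [mul_comm]

lemma intY_rename_inl_mul_rename_inr (Λ : MvPolynomial (Fin n) ℝ → ℝ)
    (hadd : ∀ q q', Λ (q + q') = Λ q + Λ q') (hsmul : ∀ (c : ℝ) q, Λ (c • q) = c * Λ q)
    (P q : MvPolynomial (Fin n) ℝ) :
    intY Λ (rename Sum.inl P * rename Sum.inr q) = Λ q • P := by
  rw [intY_rename_inl_mul, intY_rename_inr Λ hadd hsmul]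
  rw [mul_smul_comm, mul_one]

lemma totalDegree_intY_le (Λ : MvPolynomial (Fin n) ℝ → ℝ)
    (p : MvPolynomial (Fin n ⊕ Fin n) ℝ) :
    (intY Λ p).totalDegree ≤ degX p := by
  rw [intY, MvPolynomial.sum_def]
  refine (totalDegree_finset_sum _ _).trans (Finset.sup_le fun m hm => ?_)
  refine ((totalDegree_smul_le _ _).trans (totalDegree_monomial_le _ _)).trans ?_
  have h1 : ((xpart m).sum fun _ => (id : ℕ → ℕ)) = ∑ i : Fin n, m (Sum.inl i) := by
    rw [Finsupp.sum_fintype (xpart m) (fun _ => (id : ℕ → ℕ)) (fun i => rfl)]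
    simp
  rw [h1]
  exact Finset.le_sup (f := fun m => ∑ i : Fin n, m (Sum.inl i)) hm


lemma isSumSq_intY_sq (Λ : MvPolynomial (Fin n) ℝ → ℝ)
    (hadd : ∀ q q', Λ (q + q') = Λ q + Λ q') (hsmul : ∀ (c : ℝ) q, Λ (c • q) = c * Λ q)
    (hpos : ∀ q, 0 ≤ Λ (q * q)) (p : MvPolynomial (Fin n ⊕ Fin n) ℝ) :
    IsSumSq (intY Λ (p * p)) := by
  classical
  set A : Finset (Fin n →₀ ℕ) := p.support.image xpart with hA
  set cA : (Fin n →₀ ℕ) → MvPolynomial (Fin n) ℝ :=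
    fun a => ∑ m ∈ p.support.filter (fun m => xpart m = a), monomial (ypart m) (coeff m p)
    with hcA
  -- decomposition of p according to x-monomials
  have hdecomp : p = ∑ a ∈ A, rename Sum.inl (monomial a (1:ℝ)) * rename Sum.inr (cA a) := by
    have : ∀ a ∈ A, rename Sum.inl (monomial a (1:ℝ)) * rename Sum.inr (cA a)
        = ∑ m ∈ p.support.filter (fun m => xpart m = a), monomial m (coeff m p) := by
      intro a _
      rw [hcA, map_sum, Finset.mul_sum]
      refine Finset.sum_congr rfl fun m hm => ?_
      rw [Finset.mem_filter] at hm
      rw [rename_monomial, rename_monomial, monomial_mul, one_mul, ← hm.2, ← m_decomp]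
    rw [Finset.sum_congr rfl this,
      Finset.sum_fiberwise_of_maps_to (fun m hm => Finset.mem_image_of_mem xpart hm)
        (fun m => monomial m (coeff m p))]
    exact (as_sum p)
  -- Gram matrix
  let M : Matrix {x // x ∈ A} {x // x ∈ A} ℝ := fun a b => Λ (cA a.1 * cA b.1)
  have hMsd : M.PosSemidef := by
    rw [Matrix.posSemidef_iff_dotProduct_mulVec]
    constructor
    · ext a b
      show Λ (cA b.1 * cA a.1) = Λ (cA a.1 * cA b.1); rw [mul_comm]
    · intro v
      have hv : dotProduct (star v) (M.mulVec v)
          = ∑ a : {x // x ∈ A}, ∑ b : {x // x ∈ A}, (v a * v b) * Λ (cA a.1 * cA b.1) := by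
        simp only [dotProduct, Matrix.mulVec, dotProduct, star_trivial,
          Finset.mul_sum, M, Pi.star_apply]
        refine Finset.sum_congr rfl fun a _ => Finset.sum_congr rfl fun b _ => by ring
      have hv2 : Λ ((∑ a : {x // x ∈ A}, v a • cA a.1) * (∑ b : {x // x ∈ A}, v b • cA b.1))
          = ∑ a : {x // x ∈ A}, ∑ b : {x // x ∈ A}, (v a * v b) * Λ (cA a.1 * cA b.1) := by
        rw [Finset.sum_mul_sum, lam_finsetSum hadd (lam_zero hsmul)]
        refine Finset.sum_congr rfl fun a _ => ?_
        rw [lam_finsetSum hadd (lam_zero hsmul)]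
        refine Finset.sum_congr rfl fun b _ => ?_
        rw [smul_mul_smul_comm, hsmul]
      rw [hv, ← hv2]
      exact hpos _
  obtain ⟨B, hB⟩ : ∃ B : Matrix {x // x ∈ A} {x // x ∈ A} ℝ, M = star B * B := by
    open scoped MatrixOrder in exact CStarAlgebra.nonneg_iff_eq_star_mul_self.mp hMsd.nonneg
  -- the polynomials giving the sum of squares
  have key : intY Λ (p * p)
      = ∑ l : {x // x ∈ A},
          (∑ a : {x // x ∈ A}, B l a • monomial (a.1) (1:ℝ)) *
          (∑ a : {x // x ∈ A}, B l a • monomial (a.1) (1:ℝ)) := by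
    have lhs1 : intY Λ (p * p)
        = ∑ a : {x // x ∈ A}, ∑ b : {x // x ∈ A},
            M a b • (monomial a.1 (1:ℝ) * monomial b.1 (1:ℝ)) := by
      conv_lhs => rw [hdecomp, Finset.sum_mul_sum]
      rw [intY_finsetSum]
      rw [← Finset.sum_coe_sort A]
      refine Finset.sum_congr rfl fun a _ => ?_
      rw [intY_finsetSum, ← Finset.sum_coe_sort A]
      refine Finset.sum_congr rfl fun b _ => ?_
      have : rename Sum.inl (monomial a.1 (1:ℝ)) * rename Sum.inr (cA a.1) *
            (rename Sum.inl (monomial b.1 (1:ℝ)) * rename Sum.inr (cA b.1))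
          = rename Sum.inl (monomial a.1 (1:ℝ) * monomial b.1 (1:ℝ)) *
            rename Sum.inr (cA a.1 * cA b.1) := by
        rw [map_mul, map_mul]
        ring
      rw [this, intY_rename_inl_mul_rename_inr Λ hadd hsmul]
    rw [lhs1]
    simp only [Finset.sum_mul_sum]
    conv_rhs => rw [Finset.sum_comm]
    refine Finset.sum_congr rfl fun a _ => ?_
    conv_rhs => rw [Finset.sum_comm]
    refine Finset.sum_congr rfl fun b _ => ?_
    have hMab : M a b = ∑ l : {x // x ∈ A}, B l a * B l b := by
      rw [hB, Matrix.mul_apply]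
      exact Finset.sum_congr rfl fun l _ => by
        rw [Matrix.star_apply, star_trivial]
    rw [hMab, Finset.sum_smul]
    exact Finset.sum_congr rfl fun l _ => by rw [smul_mul_smul_comm]
  rw [key]
  exact IsSumSq.sum_mul_self _ _


lemma cheb_density_le {x : ℝ} (hx : x ∈ Set.Icc (-1:ℝ) 1) :
    ENNReal.ofReal (1 / (Real.pi * Real.sqrt (1 - x ^ 2)))
      ≤ ENNReal.ofReal ((1 - x) ^ (-(1:ℝ)/2)) + ENNReal.ofReal ((1 + x) ^ (-(1:ℝ)/2)) := by
  obtain ⟨hx1, hx2⟩ := hx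
  have h1 : (0:ℝ) ≤ 1 - x := by linarith
  have h2 : (0:ℝ) ≤ 1 + x := by linarith
  have hge1 : (0:ℝ) ≤ (1 - x) ^ (-(1:ℝ)/2) := Real.rpow_nonneg h1 _
  have hge2 : (0:ℝ) ≤ (1 + x) ^ (-(1:ℝ)/2) := Real.rpow_nonneg h2 _
  have key : 1 / (Real.pi * Real.sqrt (1 - x ^ 2))
      ≤ (1 - x) ^ (-(1:ℝ)/2) + (1 + x) ^ (-(1:ℝ)/2) := by
    rcases eq_or_lt_of_le h1 with h1' | h1'
    · -- x = 1
      have : 1 - x ^ 2 = 0 := by nlinarith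
      rw [this, Real.sqrt_zero, mul_zero, div_zero]
      positivity
    rcases eq_or_lt_of_le h2 with h2' | h2'
    · have : 1 - x ^ 2 = 0 := by nlinarith
      rw [this, Real.sqrt_zero, mul_zero, div_zero]
      positivity
    -- interior case
    have hprod : (0:ℝ) < 1 - x ^ 2 := by nlinarith
    have hsq : Real.sqrt (1 - x ^ 2) > 0 := Real.sqrt_pos.mpr hprod
    have hstep1 : 1 / (Real.pi * Real.sqrt (1 - x ^ 2)) ≤ 1 / Real.sqrt (1 - x ^ 2) := by
      rw [div_le_div_iff₀ (by positivity) hsq]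
      nlinarith [Real.pi_gt_three, hsq]
    have hfac : 1 - x ^ 2 = (1 - x) * (1 + x) := by ring
    have hstep2 : 1 / Real.sqrt (1 - x ^ 2) = (1 - x) ^ (-(1:ℝ)/2) * (1 + x) ^ (-(1:ℝ)/2) := by
      rw [hfac, Real.sqrt_eq_rpow, Real.mul_rpow h1 h2, one_div, mul_inv,
        ← Real.rpow_neg h1, ← Real.rpow_neg h2]
      norm_num
    have hstep3 : (1 - x) ^ (-(1:ℝ)/2) * (1 + x) ^ (-(1:ℝ)/2)
        ≤ (1 - x) ^ (-(1:ℝ)/2) + (1 + x) ^ (-(1:ℝ)/2) := by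
      rcases le_or_gt 0 x with hx0 | hx0
      · have : (1 + x) ^ (-(1:ℝ)/2) ≤ 1 :=
          Real.rpow_le_one_of_one_le_of_nonpos (by linarith) (by norm_num)
        nlinarith
      · have : (1 - x) ^ (-(1:ℝ)/2) ≤ 1 :=
          Real.rpow_le_one_of_one_le_of_nonpos (by linarith) (by norm_num)
        nlinarith
    calc 1 / (Real.pi * Real.sqrt (1 - x ^ 2)) ≤ 1 / Real.sqrt (1 - x ^ 2) := hstep1
      _ = _ := hstep2
      _ ≤ _ := hstep3
  calc ENNReal.ofReal (1 / (Real.pi * Real.sqrt (1 - x ^ 2)))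
      ≤ ENNReal.ofReal ((1 - x) ^ (-(1:ℝ)/2) + (1 + x) ^ (-(1:ℝ)/2)) :=
        ENNReal.ofReal_le_ofReal key
    _ ≤ _ := ENNReal.ofReal_add_le

lemma integrableOn_plus :
    IntegrableOn (fun x : ℝ => (1 + x) ^ (-(1:ℝ)/2)) (Set.Icc (-1:ℝ) 1) volume := by
  have base : IntervalIntegrable (fun t : ℝ => t ^ (-(1:ℝ)/2)) volume 0 2 :=
    intervalIntegral.intervalIntegrable_rpow' (by norm_num)
  have h := base.comp_sub_right (-1)
  have e1 : (0:ℝ) + -1 = -1 := by norm_num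
  have e2 : (2:ℝ) + -1 = 1 := by norm_num
  rw [e1, e2] at h
  rw [← intervalIntegrable_iff_integrableOn_Icc_of_le (by norm_num : (-1:ℝ) ≤ 1)]
  have e3 : (fun x : ℝ => (1 + x) ^ (-(1:ℝ)/2)) = fun x : ℝ => (x - (-1)) ^ (-(1:ℝ)/2) := by
    funext x; congr 1; ring
  rw [e3]
  exact h

lemma integrableOn_minus :
    IntegrableOn (fun x : ℝ => (1 - x) ^ (-(1:ℝ)/2)) (Set.Icc (-1:ℝ) 1) volume := by
  have base : IntervalIntegrable (fun t : ℝ => t ^ (-(1:ℝ)/2)) volume 0 2 :=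
    intervalIntegral.intervalIntegrable_rpow' (by norm_num)
  have h := (base.comp_sub_left 1).symm
  have e1 : (1:ℝ) - 0 = 1 := by norm_num
  have e2 : (1:ℝ) - 2 = -1 := by norm_num
  rw [e1, e2] at h
  rw [← intervalIntegrable_iff_integrableOn_Icc_of_le (by norm_num : (-1:ℝ) ≤ 1)]
  exact h

lemma lintegral_plus :
    ∫⁻ x, ENNReal.ofReal ((1 + x) ^ (-(1:ℝ)/2)) ∂(volume.restrict (Set.Icc (-1:ℝ) 1)) ≠ ⊤ := by
  have hint := integrableOn_plus
  rw [lintegral_ofReal_ne_top_iff_integrable hint.1 ?_]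
  · exact hint
  · refine (ae_restrict_mem measurableSet_Icc).mono fun x hx => ?_
    have : (0:ℝ) ≤ 1 + x := by have := hx.1; linarith
    exact Real.rpow_nonneg this _

lemma lintegral_minus :
    ∫⁻ x, ENNReal.ofReal ((1 - x) ^ (-(1:ℝ)/2)) ∂(volume.restrict (Set.Icc (-1:ℝ) 1)) ≠ ⊤ := by
  have hint := integrableOn_minus
  rw [lintegral_ofReal_ne_top_iff_integrable hint.1 ?_]
  · exact hint
  · refine (ae_restrict_mem measurableSet_Icc).mono fun x hx => ?_
    have : (0:ℝ) ≤ 1 - x := by have := hx.2; linarith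
    exact Real.rpow_nonneg this _

instance chebMeasure1_finite : IsFiniteMeasure chebMeasure1 := by
  constructor
  rw [chebMeasure1, withDensity_apply _ MeasurableSet.univ, Measure.restrict_univ]
  have hb : ∫⁻ x, ENNReal.ofReal (1 / (Real.pi * Real.sqrt (1 - x ^ 2)))
        ∂(volume.restrict (Set.Icc (-1:ℝ) 1))
      ≤ ∫⁻ x, (ENNReal.ofReal ((1 - x) ^ (-(1:ℝ)/2)) + ENNReal.ofReal ((1 + x) ^ (-(1:ℝ)/2)))
        ∂(volume.restrict (Set.Icc (-1:ℝ) 1)) := by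
    refine lintegral_mono_ae ?_
    exact (ae_restrict_mem measurableSet_Icc).mono fun x hx => cheb_density_le hx
  refine lt_of_le_of_lt hb ?_
  rw [lintegral_add_left]
  · exact ENNReal.add_lt_top.mpr ⟨lintegral_minus.lt_top, lintegral_plus.lt_top⟩
  · exact ((measurable_const.sub measurable_id').pow measurable_const).ennreal_ofReal

instance chebMeasure_finite (n : ℕ) : IsFiniteMeasure (chebMeasure n) := by
  unfold chebMeasure
  infer_instance

lemma chebMeasure1_compl_Icc : chebMeasure1 (Set.Icc (-1:ℝ) 1)ᶜ = 0 := by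
  rw [chebMeasure1, withDensity_apply _ measurableSet_Icc.compl,
    Measure.restrict_restrict measurableSet_Icc.compl, Set.compl_inter_self]
  simp

lemma ae_box (n : ℕ) : ∀ᵐ y ∂(chebMeasure n), ∀ i, |y i| ≤ 1 := by
  rw [MeasureTheory.ae_iff]
  refine measure_mono_null (fun y hy => ?_)
    (measure_iUnion_null (s := fun i => {y : Fin n → ℝ | y i ∈ (Set.Icc (-1:ℝ) 1)ᶜ}) fun i => ?_)
  · simp only [Set.mem_setOf_eq, not_forall] at hy
    obtain ⟨i, hi⟩ := hy
    refine Set.mem_iUnion.mpr ⟨i, ?_⟩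
    simp only [Set.mem_setOf_eq, Set.mem_compl_iff, Set.mem_Icc]
    rw [abs_le] at hi
    tauto
  · have hset : {y : Fin n → ℝ | y i ∈ (Set.Icc (-1:ℝ) 1)ᶜ}
        = Set.pi Set.univ (fun j => if j = i then (Set.Icc (-1:ℝ) 1)ᶜ else Set.univ) := by
      ext y
      simp only [Set.mem_setOf_eq, Set.mem_pi, Set.mem_univ, forall_const]
      constructor
      · intro h j
        by_cases hj : j = i
        · subst hj; simpa using h
        · simp [hj]
      · intro h
        have := h i
        simpa using this
    show chebMeasure n {y : Fin n → ℝ | y i ∈ (Set.Icc (-1:ℝ) 1)ᶜ} = 0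
    rw [hset, chebMeasure, Measure.pi_pi]
    refine Finset.prod_eq_zero (Finset.mem_univ i) ?_
    simpa using chebMeasure1_compl_Icc

lemma integrable_of_continuous {n : ℕ} (φ : (Fin n → ℝ) → ℝ) (hφ : Continuous φ) :
    Integrable φ (chebMeasure n) := by
  have hbox : IsCompact (Set.Icc (fun _ => (-1:ℝ)) (fun _ => (1:ℝ)) : Set (Fin n → ℝ)) :=
    isCompact_Icc
  obtain ⟨C, hC⟩ := hbox.exists_bound_of_continuousOn hφ.continuousOn
  refine Integrable.mono' (integrable_const C) hφ.aestronglyMeasurable ?_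
  refine (ae_box n).mono fun y hy => ?_
  refine hC y ?_
  rw [Set.mem_Icc]
  constructor <;> intro i <;> have := abs_le.mp (hy i)
  · exact this.1
  · exact this.2

/-! ### Integration functional -/

noncomputable def chebInt {n : ℕ} (W : MvPolynomial (Fin n) ℝ) (q : MvPolynomial (Fin n) ℝ) : ℝ :=
  ∫ y, eval y W * eval y q ∂(chebMeasure n)

lemma integrable_poly {n : ℕ} (W q : MvPolynomial (Fin n) ℝ) :
    Integrable (fun y => eval y W * eval y q) (chebMeasure n) :=
  integrable_of_continuous _ ((MvPolynomial.continuous_eval W).mul (MvPolynomial.continuous_eval q))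

lemma chebInt_add {n : ℕ} (W : MvPolynomial (Fin n) ℝ) (q q' : MvPolynomial (Fin n) ℝ) :
    chebInt W (q + q') = chebInt W q + chebInt W q' := by
  rw [chebInt, chebInt, chebInt, ← integral_add (integrable_poly W q) (integrable_poly W q')]
  congr 1
  funext y
  rw [map_add, mul_add]

lemma chebInt_smul {n : ℕ} (W : MvPolynomial (Fin n) ℝ) (c : ℝ) (q : MvPolynomial (Fin n) ℝ) :
    chebInt W (c • q) = c * chebInt W q := by
  rw [chebInt, chebInt, ← integral_const_mul]
  congr 1
  funext y
  rw [smul_eq_C_mul, map_mul, eval_C]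
  ring

lemma chebInt_mul_left {n : ℕ} (W Q q : MvPolynomial (Fin n) ℝ) :
    chebInt W (Q * q) = chebInt (W * Q) q := by
  rw [chebInt, chebInt]
  congr 1
  funext y
  rw [map_mul, map_mul]
  ring

lemma chebInt_sq_nonneg {n : ℕ} (W : MvPolynomial (Fin n) ℝ)
    (hW : ∀ y : Fin n → ℝ, (∀ i, |y i| ≤ 1) → 0 ≤ eval y W) (q : MvPolynomial (Fin n) ℝ) :
    0 ≤ chebInt W (q * q) := by
  rw [chebInt]
  refine integral_nonneg_of_ae ?_
  refine (ae_box n).mono fun y hy => ?_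
  show (0:ℝ) ≤ eval y W * eval y (q * q)
  rw [map_mul]
  exact mul_nonneg (hW y hy) (mul_self_nonneg _)

lemma eval_intY {n : ℕ} (W : MvPolynomial (Fin n) ℝ) (p : MvPolynomial (Fin n ⊕ Fin n) ℝ)
    (x : Fin n → ℝ) :
    eval x (intY (chebInt W) p) = ∫ y, eval y W * eval (Sum.elim x y) p ∂(chebMeasure n) := by
  classical
  rw [intY, MvPolynomial.sum_def, map_sum]
  have hterm : ∀ m ∈ p.support,
      eval x ((coeff m p * chebInt W (monomial (ypart m) 1)) • monomial (xpart m) (1:ℝ))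
        = ∫ y, eval y W * (coeff m p *
            ((∏ i : Fin n, x i ^ m (Sum.inl i)) * ∏ i : Fin n, y i ^ m (Sum.inr i)))
            ∂(chebMeasure n) := by
    intro m _
    have hx1 : eval x (monomial (xpart m) (1:ℝ)) = ∏ i : Fin n, x i ^ m (Sum.inl i) := by
      rw [eval_monomial, one_mul, Finsupp.prod_fintype _ _ (fun i => pow_zero _)]
      simp
    have hy1 : ∀ y : Fin n → ℝ,
        eval y (monomial (ypart m) (1:ℝ)) = ∏ i : Fin n, y i ^ m (Sum.inr i) := by
      intro y
      rw [eval_monomial, one_mul, Finsupp.prod_fintype _ _ (fun i => pow_zero _)]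
      simp
    rw [smul_eq_C_mul, map_mul, eval_C, hx1, chebInt]
    have heq : (fun y : Fin n → ℝ => eval y W * (coeff m p *
          ((∏ i : Fin n, x i ^ m (Sum.inl i)) * ∏ i : Fin n, y i ^ m (Sum.inr i))))
        = fun y : Fin n → ℝ => (coeff m p * ∏ i : Fin n, x i ^ m (Sum.inl i)) *
            (eval y W * eval y (monomial (ypart m) (1:ℝ))) := by
      funext y
      rw [hy1 y]
      ring
    rw [heq, integral_const_mul]
    ring
  rw [Finset.sum_congr rfl hterm, ← integral_finset_sum]
  · congr 1
    funext y
    rw [← Finset.mul_sum]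
    congr 1
    rw [eval_eq' (Sum.elim x y) p]
    refine Finset.sum_congr rfl fun m _ => ?_
    rw [Fintype.prod_sum_type]
    simp
  · intro m _
    refine integrable_of_continuous _ ((MvPolynomial.continuous_eval W).mul ?_)
    exact continuous_const.mul (continuous_const.mul
      (continuous_finset_prod _ fun i _ => (continuous_apply i).pow _))

lemma integrable_elim {n : ℕ} (f' : MvPolynomial (Fin n) ℝ)
    (p : MvPolynomial (Fin n ⊕ Fin n) ℝ) (x : Fin n → ℝ) :
    Integrable (fun y => eval y f' * eval (Sum.elim x y) p) (chebMeasure n) := by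
  refine integrable_of_continuous _ ((MvPolynomial.continuous_eval f').mul ?_)
  have hc : Continuous fun y : Fin n → ℝ => Sum.elim x y := by
    refine continuous_pi fun v => ?_
    cases v with
    | inl i => exact continuous_const
    | inr i => exact continuous_apply i
  exact (MvPolynomial.continuous_eval p).comp hc

/-! ### Sum-of-squares stability -/

lemma isSumSq_intY {n : ℕ} (Λ : MvPolynomial (Fin n) ℝ → ℝ)
    (hadd : ∀ q q', Λ (q + q') = Λ q + Λ q') (hsmul : ∀ (c : ℝ) q, Λ (c • q) = c * Λ q)
    (hpos : ∀ q, 0 ≤ Λ (q * q)) {s : MvPolynomial (Fin n ⊕ Fin n) ℝ} (hs : IsSumSq s) :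
    IsSumSq (intY Λ s) := by
  induction hs with
  | zero => simpa using IsSumSq.zero
  | sq_add a hS ih =>
    rw [intY_add]
    exact (isSumSq_intY_sq Λ hadd hsmul hpos a).add ih

lemma isSumSq_finsetSum {n : ℕ} {ι : Type*} (s : Finset ι) (g : ι → MvPolynomial (Fin n) ℝ)
    (h : ∀ i ∈ s, IsSumSq (g i)) : IsSumSq (∑ i ∈ s, g i) := by
  classical
  induction s using Finset.cons_induction with
  | empty => simpa using IsSumSq.zero
  | cons i s his ih =>
    rw [Finset.sum_cons]
    exact (h i (Finset.mem_cons_self i s)).add (ih fun j hj => h j (Finset.mem_cons_of_mem hj))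

/-! ### Splitting products of generators -/

lemma eLx_inj (n : ℕ) :
    Function.Injective (fun w : Fin n × Bool => ((Sum.inl w.1, w.2) : (Fin n ⊕ Fin n) × Bool)) := by
  intro a b h
  simp only [Prod.mk.injEq, Sum.inl.injEq] at h
  exact Prod.ext h.1 h.2

lemma eRy_inj (n : ℕ) :
    Function.Injective (fun w : Fin n × Bool => ((Sum.inr w.1, w.2) : (Fin n ⊕ Fin n) × Bool)) := by
  intro a b h
  simp only [Prod.mk.injEq, Sum.inr.injEq] at h
  exact Prod.ext h.1 h.2

noncomputable def IxJ {n : ℕ} (J : Finset ((Fin n ⊕ Fin n) × Bool)) : Finset (Fin n × Bool) :=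
  J.preimage _ (eLx_inj n).injOn

noncomputable def IyJ {n : ℕ} (J : Finset ((Fin n ⊕ Fin n) × Bool)) : Finset (Fin n × Bool) :=
  J.preimage _ (eRy_inj n).injOn

lemma rename_inl_pmGen {n : ℕ} (w : Fin n × Bool) :
    rename Sum.inl (pmGen w) = pmGen ((Sum.inl w.1, w.2) : (Fin n ⊕ Fin n) × Bool) := by
  obtain ⟨i, b⟩ := w
  cases b <;> simp [pmGen, map_sub, map_add, map_one, rename_X]

lemma rename_inr_pmGen {n : ℕ} (w : Fin n × Bool) :
    rename Sum.inr (pmGen w) = pmGen ((Sum.inr w.1, w.2) : (Fin n ⊕ Fin n) × Bool) := by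
  obtain ⟨i, b⟩ := w
  cases b <;> simp [pmGen, map_sub, map_add, map_one, rename_X]

lemma prod_pmGen_split {n : ℕ} (J : Finset ((Fin n ⊕ Fin n) × Bool)) :
    (∏ v ∈ J, pmGen v)
      = rename Sum.inl (∏ w ∈ IxJ J, pmGen w) * rename Sum.inr (∏ w ∈ IyJ J, pmGen w) := by
  classical
  rw [map_prod, map_prod]
  have hL : ∏ w ∈ IxJ J, rename Sum.inl (pmGen w)
      = ∏ v ∈ J.filter (fun v => v.1.isLeft), pmGen v := by
    rw [Finset.prod_congr rfl fun w _ => rename_inl_pmGen w]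
    rw [IxJ, Finset.prod_preimage']
    refine Finset.prod_congr (Finset.filter_congr fun v _ => ?_) fun _ _ => rfl
    constructor
    · rintro ⟨w, rfl⟩
      simp
    · intro h
      obtain ⟨v1, v2⟩ := v
      cases v1 with
      | inl i => exact ⟨(i, v2), rfl⟩
      | inr i => simp at h
  have hR : ∏ w ∈ IyJ J, rename Sum.inr (pmGen w)
      = ∏ v ∈ J.filter (fun v => ¬ v.1.isLeft), pmGen v := by
    rw [Finset.prod_congr rfl fun w _ => rename_inr_pmGen w]
    rw [IyJ, Finset.prod_preimage']
    refine Finset.prod_congr (Finset.filter_congr fun v _ => ?_) fun _ _ => rfl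
    constructor
    · rintro ⟨w, rfl⟩
      simp
    · intro h
      obtain ⟨v1, v2⟩ := v
      cases v1 with
      | inl i => simp at h
      | inr i => exact ⟨(i, v2), rfl⟩
  rw [hL, hR]
  exact (Finset.prod_filter_mul_prod_filter_not J _ _).symm

lemma eval_pmGen_nonneg {n : ℕ} (y : Fin n → ℝ) (hy : ∀ i, |y i| ≤ 1) (w : Fin n × Bool) :
    0 ≤ eval y (pmGen w) := by
  obtain ⟨i, b⟩ := w
  have := abs_le.mp (hy i)
  cases b <;> simp [pmGen] <;> linarith [this.1, this.2]


end ChebAux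

open ChebAux in
/-- If `K(x,y) ∈ 𝒯(1±x_1,...,1±x_n; 1±y_1,...,1±y_n)_{r,r}` then, for every `f` of
degree at most `d` nonnegative on `[−1,1]^n`, the polynomial
`x ↦ ∫ f(y) K(x,y) dμ(y)` lies in `𝒯(1±x_1,...,1±x_n)_r`. -/
theorem convolution_with_biPre_kernel_mem_truncPre (n r d : ℕ)
    (K : MvPolynomial (Fin n ⊕ Fin n) ℝ) (hK : K ∈ biPre n r r)
    (f : MvPolynomial (Fin n) ℝ) (hdf : f.totalDegree ≤ d)
    (hf : ∀ x : Fin n → ℝ, (∀ i, |x i| ≤ 1) → 0 ≤ eval x f) :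
    ∃ g ∈ truncPre (pmGen (σ := Fin n)) r, ∀ x : Fin n → ℝ,
      eval x g = ∫ y, eval y f * eval (Sum.elim x y) K ∂(chebMeasure n) := by
  classical
  obtain ⟨sK, hSOS, hdeg, hKeq⟩ := hK
  have hpos : ∀ J : Finset ((Fin n ⊕ Fin n) × Bool), ∀ q,
      0 ≤ chebInt (f * ∏ w ∈ IyJ J, pmGen w) (q * q) := by
    intro J q
    refine chebInt_sq_nonneg _ (fun y hy => ?_) q
    rw [map_mul]
    refine mul_nonneg (hf y hy) ?_
    rw [map_prod]
    exact Finset.prod_nonneg fun w _ => eval_pmGen_nonneg y hy w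
  have hPlanB : ∀ J : Finset ((Fin n ⊕ Fin n) × Bool),
      intY (chebInt f) (sK J * ∏ v ∈ J, pmGen v)
        = (∏ w ∈ IxJ J, pmGen w) * intY (chebInt (f * ∏ w ∈ IyJ J, pmGen w)) (sK J) := by
    intro J
    rw [prod_pmGen_split J]
    have hre : sK J * (rename Sum.inl (∏ w ∈ IxJ J, pmGen w)
          * rename Sum.inr (∏ w ∈ IyJ J, pmGen w))
        = rename Sum.inl (∏ w ∈ IxJ J, pmGen w)
          * (sK J * rename Sum.inr (∏ w ∈ IyJ J, pmGen w)) := by ring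
    rw [hre, intY_rename_inl_mul, intY_mul_rename_inr _ (chebInt_add f) (chebInt_smul f)]
    congr 1
    have : (fun q => chebInt f ((∏ w ∈ IyJ J, pmGen w) * q))
        = chebInt (f * ∏ w ∈ IyJ J, pmGen w) := by
      funext q
      rw [chebInt_mul_left]
    rw [this]
  refine ⟨∑ J : Finset ((Fin n ⊕ Fin n) × Bool),
      intY (chebInt f) (sK J * ∏ v ∈ J, pmGen v),
    ⟨fun I => ∑ J : Finset ((Fin n ⊕ Fin n) × Bool),
        if IxJ J = I then intY (chebInt (f * ∏ w ∈ IyJ J, pmGen w)) (sK J) else 0,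
      ?_, ?_, ?_⟩, ?_⟩
  · -- sums of squares
    intro I
    refine isSumSq_finsetSum _ _ fun J _ => ?_
    by_cases h : IxJ J = I
    · rw [if_pos h]
      exact isSumSq_intY _ (chebInt_add _) (chebInt_smul _) (hpos J) (hSOS J)
    · rw [if_neg h]
      exact IsSumSq.zero
  · -- degree bounds
    intro I
    rw [Finset.sum_mul]
    refine (totalDegree_finset_sum _ _).trans (Finset.sup_le fun J _ => ?_)
    by_cases h : IxJ J = I
    · rw [if_pos h, ← h]
      have he : intY (chebInt (f * ∏ w ∈ IyJ J, pmGen w)) (sK J) * ∏ w ∈ IxJ J, pmGen w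
          = intY (chebInt f) (sK J * ∏ v ∈ J, pmGen v) := by
        rw [hPlanB J, mul_comm]
      rw [he]
      exact (totalDegree_intY_le _ _).trans (hdeg J).1
    · rw [if_neg h, zero_mul]
      simp
  · -- the sum identity
    have hstep : ∀ J : Finset ((Fin n ⊕ Fin n) × Bool),
        (∑ I : Finset (Fin n × Bool),
          if IxJ J = I then (intY (chebInt (f * ∏ w ∈ IyJ J, pmGen w)) (sK J))
              * ∏ w ∈ I, pmGen w else 0)
          = intY (chebInt f) (sK J * ∏ v ∈ J, pmGen v) := by
      intro J
      rw [Finset.sum_ite_eq, if_pos (Finset.mem_univ _), hPlanB J, mul_comm]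
    calc (∑ J : Finset ((Fin n ⊕ Fin n) × Bool),
            intY (chebInt f) (sK J * ∏ v ∈ J, pmGen v))
        = ∑ J : Finset ((Fin n ⊕ Fin n) × Bool), ∑ I : Finset (Fin n × Bool),
            if IxJ J = I then (intY (chebInt (f * ∏ w ∈ IyJ J, pmGen w)) (sK J))
              * ∏ w ∈ I, pmGen w else 0 := by
          exact Finset.sum_congr rfl fun J _ => (hstep J).symm
      _ = ∑ I : Finset (Fin n × Bool), (∑ J : Finset ((Fin n ⊕ Fin n) × Bool),
            if IxJ J = I then intY (chebInt (f * ∏ w ∈ IyJ J, pmGen w)) (sK J) else 0)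
              * ∏ w ∈ I, pmGen w := by
          rw [Finset.sum_comm]
          refine Finset.sum_congr rfl fun I _ => ?_
          rw [Finset.sum_mul]
          refine Finset.sum_congr rfl fun J _ => ?_
          rw [ite_mul, zero_mul]
  · -- the evaluation identity
    intro x
    rw [map_sum]
    have hterm : ∀ J ∈ (Finset.univ : Finset (Finset ((Fin n ⊕ Fin n) × Bool))),
        eval x (intY (chebInt f) (sK J * ∏ v ∈ J, pmGen v))
          = ∫ y, eval y f * eval (Sum.elim x y) (sK J * ∏ v ∈ J, pmGen v) ∂(chebMeasure n) :=
      fun J _ => eval_intY f _ x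
    rw [Finset.sum_congr rfl hterm, ← integral_finset_sum _ fun J _ => integrable_elim f _ x]
    congr 1
    funext y
    rw [hKeq, map_sum, Finset.mul_sum]
end
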